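/- arXiv:2601.15215 — 7 statements merged into one kernel-verified Lean document; each statement's English description precedes it below -/
import Mathlib

section
/- Fix a bigraph G and c : [k] → V. The map sending a pair (σ, (π_B)_{B∈σ}) — where σ ∈ P(c,G) and each π_B is a connected partition of the block B — to the union ⋃_{B∈σ} π_B is a bijection onto P̃(c,G). Its inverse sends π ∈ P̃(c,G) to the pair consisting of the colorwise non-crossing envelope σ of π and the restrictions of π to the blocks of σ. -/
/-- A bigraph: two edge sets on a common vertex set, `E1` reflexive,
`E2` irreflexive and symmetric. -/
structure Bigraph (V : Type) where
  E1 : Set (V × V)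
  E2 : Set (V × V)
  refl1 : ∀ v : V, (v, v) ∈ E1
  irrefl2 : ∀ v : V, (v, v) ∉ E2
  symm2 : ∀ v w : V, (v, w) ∈ E2 → (w, v) ∈ E2

/-- `i` and `j` lie in the same block of `π`. -/
def SameBlock {k : ℕ} (π : Set (Set (Fin k))) (i j : Fin k) : Prop :=
  ∃ B ∈ π, i ∈ B ∧ j ∈ B

def CrossingOne {k : ℕ} (B B' : Set (Fin k)) : Prop :=
  ∃ i i' j j' : Fin k, i < i' ∧ i' < j ∧ j < j' ∧ i ∈ B ∧ j ∈ B ∧ i' ∈ B' ∧ j' ∈ B'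

def Crossing {k : ℕ} (B B' : Set (Fin k)) : Prop :=
  CrossingOne B B' ∨ CrossingOne B' B

/-- `B'` is nested inside `B` (written `B ≺ B'` in the paper). -/
def NestedIn {k : ℕ} (B' B : Set (Fin k)) : Prop :=
  ∃ i ∈ B, ∃ j ∈ B, i < j ∧ (∀ x ∈ B, ¬ (i < x ∧ x < j)) ∧ (∀ x ∈ B', i < x ∧ x < j)

/-- Every block of `π` is monochromatic under `c`. -/
def Monochromatic {V : Type} {k : ℕ} (c : Fin k → V) (π : Set (Set (Fin k))) : Prop :=
  ∀ B ∈ π, ∀ i ∈ B, ∀ j ∈ B, c i = c j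

/-- `π ∈ P(c, G)` (Definition 1.3 of compatible partitions). -/
def MemP {V : Type} {k : ℕ} (G : Bigraph V) (c : Fin k → V) (π : Set (Set (Fin k))) : Prop :=
  Setoid.IsPartition π ∧ Monochromatic c π ∧
  (∀ i1 j i2 : Fin k, i1 < j → j < i2 → SameBlock π i1 i2 → (c i1, c j) ∈ G.E1) ∧
  (∀ i1 j1 i2 j2 : Fin k, i1 < j1 → j1 < i2 → i2 < j2 →
    SameBlock π i1 i2 → SameBlock π j1 j2 → ¬ SameBlock π i1 j1 → (c i2, c j1) ∈ G.E2)

/-- The unobstructed nesting relation `B ≺_un B'` on blocks of `π`. -/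
def PrecUn {V : Type} {k : ℕ} (G : Bigraph V) (c : Fin k → V) (π : Set (Set (Fin k)))
    (B B' : Set (Fin k)) : Prop :=
  B ≠ B' ∧ (∀ i ∈ B, ∀ j ∈ B', c i = c j) ∧ NestedIn B' B ∧
  ∀ B'' ∈ π, NestedIn B'' B → NestedIn B' B'' →
    ∀ i ∈ B, ∀ j ∈ B'', (c i, c j) ∈ G.E2 ∨ c i = c j

def MemPt {V : Type} {k : ℕ} (G : Bigraph V) (c : Fin k → V) (π : Set (Set (Fin k))) : Prop :=
  Setoid.IsPartition π ∧ Monochromatic c π ∧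
  (∀ i1 j i2 : Fin k, i1 < j → j < i2 → SameBlock π i1 i2 → (c i1, c j) ∈ G.E1) ∧
  (∀ i1 j1 i2 j2 : Fin k, i1 < j1 → j1 < i2 → i2 < j2 →
    SameBlock π i1 i2 → SameBlock π j1 j2 → ¬ SameBlock π i1 j1 →
    ((c i2, c j1) ∈ G.E2 ∨ c i2 = c j1))

def Coarser {k : ℕ} (π σ : Set (Set (Fin k))) : Prop :=
  ∀ A ∈ π, ∃ B ∈ σ, A ⊆ B

def PartOn {k : ℕ} (S : Set (Fin k)) (P : Set (Set (Fin k))) : Prop :=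
  ∅ ∉ P ∧ (∀ A ∈ P, A ⊆ S) ∧ ∀ a ∈ S, ∃! A, A ∈ P ∧ a ∈ A

def NonCrossingPart {k : ℕ} (P : Set (Set (Fin k))) : Prop :=
  ∀ A ∈ P, ∀ A' ∈ P, A ≠ A' → ¬ Crossing A A'

/-- `P` (a partition of `S`) is connected: its non-crossing envelope is `{S}`,
i.e. every non-crossing coarsening of `P` partitioning `S` has `S` as a block. -/
def ConnectedOn {k : ℕ} (S : Set (Fin k)) (P : Set (Set (Fin k))) : Prop :=
  ∀ σ : Set (Set (Fin k)), PartOn S σ → Coarser P σ → NonCrossingPart σ → S ∈ σ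

def ColorwiseNonCrossing {V : Type} {k : ℕ} (c : Fin k → V) (σ : Set (Set (Fin k))) : Prop :=
  ∀ A ∈ σ, ∀ B ∈ σ, A ≠ B → (∃ i ∈ A, ∃ j ∈ B, c i = c j) → ¬ Crossing A B

def IsCwNCEnv {V : Type} {k : ℕ} (c : Fin k → V) (π σ : Set (Set (Fin k))) : Prop :=
  Setoid.IsPartition σ ∧ Coarser π σ ∧ Monochromatic c σ ∧ ColorwiseNonCrossing c σ ∧
  ∀ σ' : Set (Set (Fin k)), Setoid.IsPartition σ' → Coarser π σ' → Monochromatic c σ' →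
    ColorwiseNonCrossing c σ' → Coarser σ σ'

namespace CDB
open Relation

variable {V : Type} {k : ℕ}

/-- Linking relation: same block, or in crossing blocks of the same color. -/
def Lk (c : Fin k → V) (π : Set (Set (Fin k))) (i j : Fin k) : Prop :=
  SameBlock π i j ∨ (c i = c j ∧ ∃ A ∈ π, ∃ B ∈ π, i ∈ A ∧ j ∈ B ∧ Crossing A B)

def E (c : Fin k → V) (π : Set (Set (Fin k))) : Fin k → Fin k → Prop := EqvGen (Lk c π)

variable {c : Fin k → V} {π : Set (Set (Fin k))}

lemma Erefl (i : Fin k) : E c π i i := EqvGen.refl i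
lemma Esymm {i j : Fin k} (h : E c π i j) : E c π j i := EqvGen.symm i j h
lemma Etrans {i j l : Fin k} (h : E c π i j) (h' : E c π j l) : E c π i l :=
  EqvGen.trans i j l h h'
lemma Erel {i j : Fin k} (h : Lk c π i j) : E c π i j := EqvGen.rel i j h

lemma sameBlock_E {i j : Fin k} (h : SameBlock π i j) : E c π i j := Erel (Or.inl h)

lemma blk_unique (hπ : Setoid.IsPartition π) {A B : Set (Fin k)} {a : Fin k}
    (hA : A ∈ π) (hB : B ∈ π) (haA : a ∈ A) (haB : a ∈ B) : A = B := by
  obtain ⟨D, _, hu⟩ := hπ.2 a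
  rw [hu A ⟨hA, haA⟩, hu B ⟨hB, haB⟩]

lemma E_color (hmono : Monochromatic c π) {i j : Fin k} (h : E c π i j) : c i = c j := by
  induction h with
  | rel x y h => rcases h with ⟨D, hD, hx, hy⟩ | ⟨hc, _⟩; exacts [hmono D hD x hx y hy, hc]
  | refl x => rfl
  | symm x y _ ih => exact ih.symm
  | trans x y z _ _ ih1 ih2 => exact ih1.trans ih2

lemma crossingOne_mono {A A' B B' : Set (Fin k)} (hA : A ⊆ A') (hB : B ⊆ B') :
    CrossingOne A B → CrossingOne A' B' := by
  rintro ⟨i, i', j, j', h1, h2, h3, hiA, hjA, hi'B, hj'B⟩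
  exact ⟨i, i', j, j', h1, h2, h3, hA hiA, hA hjA, hB hi'B, hB hj'B⟩

lemma crossing_mono {A A' B B' : Set (Fin k)} (hA : A ⊆ A') (hB : B ⊆ B') :
    Crossing A B → Crossing A' B' :=
  Or.imp (crossingOne_mono hA hB) (crossingOne_mono hB hA)

lemma crossing_symm {A B : Set (Fin k)} (h : Crossing A B) : Crossing B A := h.symm

lemma crossing_middle {A B : Set (Fin k)} (h : Crossing A B) :
    ∃ w ∈ B, ∃ t1 ∈ A, ∃ t2 ∈ A, t1 < w ∧ w < t2 := by
  rcases h with ⟨i, i', j, j', h1, h2, h3, hiA, hjA, hi'B, hj'B⟩ |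
    ⟨i, i', j, j', h1, h2, h3, hiB, hjB, hi'A, hj'A⟩
  · exact ⟨i', hi'B, i, hiA, j, hjA, h1, h2⟩
  · exact ⟨j, hjB, i', hi'A, j', hj'A, h2, h3⟩

end CDB

namespace CDB
open Relation
variable {V : Type} {k : ℕ} {c : Fin k → V} {π : Set (Set (Fin k))}

/-- If `i ≈ i'` straddle `m` and `m` is not in the class, some block of the
class straddles `m`. -/
lemma split (hπ : Setoid.IsPartition π) {i i' m : Fin k} (hE : E c π i i')
    (hm : ¬ E c π i m) (h1 : i < m) (h2 : m < i') :
    ∃ A ∈ π, ∃ p ∈ A, ∃ q ∈ A, E c π i p ∧ p < m ∧ m < q := by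
  set Str := ∃ A ∈ π, ∃ p ∈ A, ∃ q ∈ A, E c π i p ∧ p < m ∧ m < q with hStr
  have aux : ∀ x y : Fin k, EqvGen (Lk c π) x y → E c π i x → ((x < m ↔ y < m) ∨ Str) := by
    intro x y hxy
    induction hxy with
    | refl x => exact fun _ => Or.inl Iff.rfl
    | symm x y h ih => exact fun hiy => (ih (Etrans hiy (Esymm (h : E c π x y)))).imp Iff.symm id
    | trans x y z h1' h2' ih1 ih2 =>
      intro hix
      rcases ih1 hix with hiff1 | hs
      · rcases ih2 (Etrans hix h1') with hiff2 | hs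
        · exact Or.inl (hiff1.trans hiff2)
        · exact Or.inr hs
      · exact Or.inr hs
    | rel x y h =>
      intro hix
      by_cases hiff : (x < m ↔ y < m); · exact Or.inl hiff
      right
      rcases h with ⟨D, hD, hxD, hyD⟩ | ⟨hc, A, hA, B, hB, hxA, hyB, hcr⟩
      · -- same block
        have hmD : m ∉ D := fun hmD => hm (Etrans hix (sameBlock_E ⟨D, hD, hxD, hmD⟩))
        rcases not_iff.mp hiff with hiff'
        by_cases hx : x < m
        · have hy : m < y := lt_of_le_of_ne (not_lt.mp (by tauto))
            (fun h => hmD (h ▸ hyD))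
          exact ⟨D, hD, x, hxD, y, hyD, hix, hx, hy⟩
        · have hy : y < m := by tauto
          have hx' : m < x := lt_of_le_of_ne (not_lt.mp hx) (fun h => hmD (h ▸ hxD))
          exact ⟨D, hD, y, hyD, x, hxD, Etrans hix (Erel (Or.inl ⟨D, hD, hxD, hyD⟩)), hy, hx'⟩
      · -- crossing link
        have hiy : E c π i y := Etrans hix (Erel (Or.inr ⟨hc, A, hA, B, hB, hxA, hyB, hcr⟩))
        have hmA : m ∉ A := fun hmA => hm (Etrans hix (sameBlock_E ⟨A, hA, hxA, hmA⟩))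
        have hmB : m ∉ B := fun hmB => hm (Etrans hiy (sameBlock_E ⟨B, hB, hyB, hmB⟩))
        by_cases hsA : ∃ p ∈ A, ∃ q ∈ A, p < m ∧ m < q
        · obtain ⟨p, hp, q, hq, hpm, hmq⟩ := hsA
          exact ⟨A, hA, p, hp, q, hq, Etrans hix (sameBlock_E ⟨A, hA, hxA, hp⟩), hpm, hmq⟩
        by_cases hsB : ∃ p ∈ B, ∃ q ∈ B, p < m ∧ m < q
        · obtain ⟨p, hp, q, hq, hpm, hmq⟩ := hsB
          exact ⟨B, hB, p, hp, q, hq, Etrans hiy (sameBlock_E ⟨B, hB, hyB, hp⟩), hpm, hmq⟩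
        exfalso
        rcases not_iff.mp hiff with hiff'
        -- wlog-like: A entirely on side of x, B entirely on side of y
        by_cases hx : x < m
        · have hy : m < y := lt_of_le_of_ne (not_lt.mp (by tauto)) (fun h => hmB (h ▸ hyB))
          have hAlow : ∀ t ∈ A, t < m := by
            intro t ht
            rcases lt_trichotomy t m with h | h | h
            · exact h
            · exact absurd (h ▸ ht) hmA
            · exact absurd ⟨x, hxA, t, ht, hx, h⟩ hsA
          have hBhigh : ∀ t ∈ B, m < t := by
            intro t ht
            rcases lt_trichotomy t m with h | h | h
            · exact absurd ⟨t, ht, y, hyB, h, hy⟩ hsB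
            · exact absurd (h ▸ ht) hmB
            · exact h
          rcases hcr with ⟨a, b, a2, b2, l1, l2, l3, haA, ha2A, hbB, hb2B⟩ |
            ⟨a, b, a2, b2, l1, l2, l3, haB, ha2B, hbA, hb2A⟩
          · exact absurd (l2.trans (hAlow a2 ha2A)) (lt_asymm (hBhigh b hbB))
          · exact absurd (l1.trans (hAlow b hbA)) (lt_asymm (hBhigh a haB))
        · have hy : y < m := by tauto
          have hx' : m < x := lt_of_le_of_ne (not_lt.mp hx) (fun h => hmA (h ▸ hxA))
          have hBlow : ∀ t ∈ B, t < m := by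
            intro t ht
            rcases lt_trichotomy t m with h | h | h
            · exact h
            · exact absurd (h ▸ ht) hmB
            · exact absurd ⟨y, hyB, t, ht, hy, h⟩ hsB
          have hAhigh : ∀ t ∈ A, m < t := by
            intro t ht
            rcases lt_trichotomy t m with h | h | h
            · exact absurd ⟨t, ht, x, hxA, h, hx'⟩ hsA
            · exact absurd (h ▸ ht) hmA
            · exact h
          rcases hcr with ⟨a, b, a2, b2, l1, l2, l3, haA, ha2A, hbB, hb2B⟩ |
            ⟨a, b, a2, b2, l1, l2, l3, haB, ha2B, hbA, hb2A⟩
          · exact absurd (l1.trans (hBlow b hbB)) (lt_asymm (hAhigh a haA))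
          · exact absurd (l2.trans (hBlow a2 ha2B)) (lt_asymm (hAhigh b hbA))
  rcases aux i i' hE (Erefl i) with hiff | hs
  · exact absurd (hiff.mp h1) (not_lt.mpr h2.le)
  · exact hs

end CDB

namespace CDB
open Relation
variable {V : Type} {k : ℕ} {c : Fin k → V} {π : Set (Set (Fin k))} {z w : Fin k}

/-- Confinement: if block `A` of the `z`-class straddles `w`, and no `z`-class
block crosses a `w`-class block, then the whole `w`-class is inside the gap. -/
lemma conf (hzw : ¬ E c π z w)
    (H : ∀ A' ∈ π, ∀ B' ∈ π, (∃ x ∈ A', E c π z x) → (∃ y ∈ B', E c π w y) →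
      ¬ Crossing A' B')
    {A : Set (Fin k)} {p q : Fin k} (hA : A ∈ π) (hp : p ∈ A) (hq : q ∈ A)
    (hpz : E c π z p) (hw1 : p < w) (hw2 : w < q) :
    ∀ y, E c π w y → p < y ∧ y < q := by
  have hzq : E c π z q := Etrans hpz (sameBlock_E ⟨A, hA, hp, hq⟩)
  have blockConf : ∀ D ∈ π, ∀ x ∈ D, E c π w x → p < x → x < q →
      ∀ t ∈ D, p < t ∧ t < q := by
    intro D hD x hxD hwx hx1 hx2 t htD
    have hwt : E c π w t := Etrans hwx (sameBlock_E ⟨D, hD, hxD, htD⟩)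
    have htp : t ≠ p := fun h => hzw (Etrans hpz (Esymm (h ▸ hwt)))
    have htq : t ≠ q := fun h => hzw (Etrans hzq (Esymm (h ▸ hwt)))
    constructor
    · rcases lt_trichotomy p t with h | h | h
      · exact h
      · exact absurd h.symm htp
      · exact absurd (Or.inr ⟨t, p, x, q, h, hx1, hx2, htD, hxD, hp, hq⟩)
          (H A hA D hD ⟨p, hp, hpz⟩ ⟨x, hxD, hwx⟩)
    · rcases lt_trichotomy t q with h | h | h
      · exact h
      · exact absurd h htq
      · exact absurd (Or.inl ⟨p, x, q, t, hx1, hx2, h, hp, hq, hxD, htD⟩)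
          (H A hA D hD ⟨p, hp, hpz⟩ ⟨x, hxD, hwx⟩)
  have step : ∀ D ∈ π, ∀ D' ∈ π, ∀ x ∈ D, ∀ y ∈ D', Crossing D D' → E c π x y →
      E c π w x → p < x → x < q → p < y ∧ y < q := by
    intro D hD D' hD' x hxD y hyD' hcr hxy hwx hx1 hx2
    obtain ⟨mid, hmidD', t1, ht1, t2, ht2, hm1, hm2⟩ := crossing_middle hcr
    have h1 := blockConf D hD x hxD hwx hx1 hx2 t1 ht1
    have h2 := blockConf D hD x hxD hwx hx1 hx2 t2 ht2
    have hwy : E c π w y := Etrans hwx hxy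
    have hwmid : E c π w mid := Etrans hwy (sameBlock_E ⟨D', hD', hyD', hmidD'⟩)
    exact blockConf D' hD' mid hmidD' hwmid (h1.1.trans hm1) (hm2.trans h2.2) y hyD'
  have aux : ∀ x y : Fin k, EqvGen (Lk c π) x y → E c π w x →
      ((p < x ∧ x < q) ↔ (p < y ∧ y < q)) := by
    intro x y hxy
    induction hxy with
    | refl x => exact fun _ => Iff.rfl
    | symm x y h ih => exact fun hwy => (ih (Etrans hwy (Esymm (h : E c π x y)))).symm
    | trans x y z' h1' h2' ih1 ih2 =>
      exact fun hwx => (ih1 hwx).trans (ih2 (Etrans hwx h1'))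
    | rel x y h =>
      intro hwx
      have hwy : E c π w y := Etrans hwx (Erel h)
      rcases h with ⟨D, hD, hxD, hyD⟩ | ⟨hc, D, hD, D', hD', hxD, hyD', hcr⟩
      · constructor
        · exact fun ⟨a, b⟩ => blockConf D hD x hxD hwx a b y hyD
        · exact fun ⟨a, b⟩ => blockConf D hD y hyD hwy a b x hxD
      · constructor
        · exact fun ⟨a, b⟩ => step D hD D' hD' x hxD y hyD' hcr (Erel (Or.inr
            ⟨hc, D, hD, D', hD', hxD, hyD', hcr⟩)) hwx a b
        · exact fun ⟨a, b⟩ => step D' hD' D hD y hyD' x hxD (crossing_symm hcr)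
            (Esymm (Erel (Or.inr ⟨hc, D, hD, D', hD', hxD, hyD', hcr⟩))) hwy a b
  exact fun y hwy => (aux w y hwy (Erefl w)).mp ⟨hw1, hw2⟩

/-- Key lemma: a crossing between two distinct classes yields a crossing
between a block of the first class and a block of the second. -/
lemma cross_lift (hπ : Setoid.IsPartition π) {i1 j1 i2 j2 : Fin k}
    (l1 : i1 < j1) (l2 : j1 < i2) (l3 : i2 < j2)
    (h12 : E c π i1 i2) (hj : E c π j1 j2) (hne : ¬ E c π i1 j1) :
    ∃ A ∈ π, ∃ B ∈ π, (∃ x ∈ A, E c π i1 x) ∧ (∃ y ∈ B, E c π j1 y) ∧ Crossing A B := by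
  by_contra H
  push_neg at H
  obtain ⟨A, hA, p, hp, q, hq, hip, hpj1, hj1q⟩ := split hπ h12 hne l1 l2
  have hne' : ¬ E c π j1 i2 := fun h => hne (Etrans h12 (Esymm h))
  obtain ⟨B, hB, u, hu, v, hv, hju, hui2, hi2v⟩ := split hπ hj hne' l2 l3
  have H' : ∀ A' ∈ π, ∀ B' ∈ π, (∃ x ∈ A', E c π j1 x) → (∃ y ∈ B', E c π i2 y) →
      ¬ Crossing A' B' := by
    rintro A' hA' B' hB' ⟨x, hx, hjx⟩ ⟨y, hy, hi2y⟩ hcr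
    exact H B' hB' A' hA' ⟨y, hy, Etrans h12 hi2y⟩ ⟨x, hx, hjx⟩ (crossing_symm hcr)
  have C1 := conf hne H hA hp hq hip hpj1 hj1q
  have C2 := conf hne' H' hB hu hv hju hui2 hi2v
  have h1 : p < u := (C1 u hju).1
  have h2 : u < p := (C2 p (Etrans (Esymm h12) hip)).1
  exact absurd h1 (lt_asymm h2)

end CDB

namespace CDB
open Relation
variable {V : Type} {k : ℕ} {c : Fin k → V} {π σ σ' : Set (Set (Fin k))} {G : Bigraph V}

/-- The colorwise non-crossing envelope: classes of the equivalence generated by `Lk`. -/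
def env (c : Fin k → V) (π : Set (Set (Fin k))) : Set (Set (Fin k)) :=
  (EqvGen.setoid (Lk c π)).classes

lemma mem_env_iff {B : Set (Fin k)} : B ∈ env c π ↔ ∃ y, B = {x | E c π x y} :=
  Iff.rfl

lemma env_isPartition : Setoid.IsPartition (env c π) :=
  Setoid.isPartition_classes _

lemma sameBlock_env {i j : Fin k} : SameBlock (env c π) i j ↔ E c π i j := by
  constructor
  · rintro ⟨B, ⟨y, rfl⟩, hi, hj⟩
    exact Etrans hi (Esymm hj)
  · intro h
    exact ⟨{x | E c π x j}, ⟨j, rfl⟩, h, Erefl j⟩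

lemma env_closed {B : Set (Fin k)} {x y : Fin k} (hB : B ∈ env c π) (hx : x ∈ B)
    (hxy : E c π x y) : y ∈ B := by
  obtain ⟨w, rfl⟩ := hB
  exact Etrans (Esymm hxy) hx

lemma env_mono (hmono : Monochromatic c π) : Monochromatic c (env c π) := by
  rintro B ⟨y, rfl⟩ i hi j hj
  exact E_color hmono (Etrans hi (Esymm hj))

lemma coarser_env (hπ : Setoid.IsPartition π) : Coarser π (env c π) := by
  intro A hA
  have hne : A.Nonempty := Set.nonempty_iff_ne_empty.mpr (fun h => hπ.1 (h ▸ hA))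
  obtain ⟨a, ha⟩ := hne
  exact ⟨{x | E c π x a}, ⟨a, rfl⟩, fun t ht => sameBlock_E ⟨A, hA, ht, ha⟩⟩

lemma memP_env (hpt : MemPt G c π) : MemP G c (env c π) := by
  obtain ⟨hπ, hmono, hE1, hE2⟩ := hpt
  refine ⟨env_isPartition, env_mono hmono, ?_, ?_⟩
  · intro i1 j i2 hlt1 hlt2 hsb
    have hE12 := sameBlock_env.mp hsb
    by_cases hEj : E c π i1 j
    · have h := E_color hmono hEj
      rw [← h]
      exact G.refl1 (c i1)
    · obtain ⟨A, hA, p, hp, q, hq, hip, hpj, hjq⟩ := split hπ hE12 hEj hlt1 hlt2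
      have h := hE1 p j q hpj hjq ⟨A, hA, hp, hq⟩
      rwa [E_color hmono hip]
  · intro i1 j1 i2 j2 l1 l2 l3 hs1 hs2 hns
    have hE12 := sameBlock_env.mp hs1
    have hEj := sameBlock_env.mp hs2
    have hne : ¬ E c π i1 j1 := fun h => hns (sameBlock_env.mpr h)
    obtain ⟨A, hA, B, hB, ⟨x, hx, hix⟩, ⟨y, hy, hjy⟩, hcr⟩ :=
      cross_lift hπ l1 l2 l3 hE12 hEj hne
    have hcolA : ∀ t ∈ A, c t = c i1 := fun t ht =>
      (E_color hmono (Etrans hix (sameBlock_E ⟨A, hA, hx, ht⟩))).symm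
    have hcolB : ∀ t ∈ B, c t = c j1 := fun t ht =>
      (E_color hmono (Etrans hjy (sameBlock_E ⟨B, hB, hy, ht⟩))).symm
    have hcc : ¬ (c x = c y) := by
      intro h
      exact hne (Etrans hix (Etrans (Erel (Or.inr ⟨h, A, hA, B, hB, hx, hy, hcr⟩))
        (Esymm hjy)))
    have hci2 : c i2 = c i1 := (E_color hmono (Etrans (Esymm hE12) (Erefl i1))).symm ▸
      (E_color hmono hE12).symm
    rcases hcr with ⟨a, b, a2, b2, m1, m2, m3, haA, ha2A, hbB, hb2B⟩ |
      ⟨a, b, a2, b2, m1, m2, m3, haB, ha2B, hbA, hb2A⟩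
    · have hnab : ¬ SameBlock π a b := by
        rintro ⟨D, hD, haD, hbD⟩
        exact hne (Etrans (Etrans hix (sameBlock_E ⟨A, hA, hx, haA⟩))
          (Etrans (sameBlock_E ⟨D, hD, haD, hbD⟩) (Esymm (Etrans hjy (sameBlock_E ⟨B, hB, hy, hbB⟩)))))
      rcases hE2 a b a2 b2 m1 m2 m3 ⟨A, hA, haA, ha2A⟩ ⟨B, hB, hbB, hb2B⟩ hnab with h | h
      · have e1 : c a2 = c i1 := hcolA a2 ha2A
        have e2 : c b = c j1 := hcolB b hbB
        rw [hci2, ← e1, ← e2]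
        exact h
      · exact absurd (((hcolA x hx).trans ((hcolA a2 ha2A).symm.trans h)).trans
          ((hcolB b hbB).trans (hcolB y hy).symm)) hcc
    · have hnab : ¬ SameBlock π a b := by
        rintro ⟨D, hD, haD, hbD⟩
        exact hne (Etrans (Etrans hix (sameBlock_E ⟨A, hA, hx, hbA⟩))
          (Etrans (Esymm (sameBlock_E ⟨D, hD, haD, hbD⟩))
            (Esymm (Etrans hjy (sameBlock_E ⟨B, hB, hy, haB⟩)))))
      rcases hE2 a b a2 b2 m1 m2 m3 ⟨B, hB, haB, ha2B⟩ ⟨A, hA, hbA, hb2A⟩ hnab with h | h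
      · have e1 : c a2 = c j1 := hcolB a2 ha2B
        have e2 : c b = c i1 := hcolA b hbA
        rw [hci2, ← e1, ← e2]
        exact G.symm2 _ _ h
      · exact absurd (((hcolA x hx).trans ((hcolA b hbA).symm.trans h.symm)).trans
          ((hcolB a2 ha2B).trans (hcolB y hy).symm)) hcc

lemma memP_cwNC (h : MemP G c σ) : ColorwiseNonCrossing c σ := by
  obtain ⟨hp, hm, _, hE2⟩ := h
  rintro A hA B hB hne ⟨i, hi, j, hj, hcij⟩ hcr
  rcases hcr with ⟨a, b, a2, b2, m1, m2, m3, haA, ha2A, hbB, hb2B⟩ |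
    ⟨a, b, a2, b2, m1, m2, m3, haB, ha2B, hbA, hb2A⟩
  · have hnab : ¬ SameBlock σ a b := by
      rintro ⟨D, hD, haD, hbD⟩
      exact hne ((blk_unique hp hA hD haA haD).trans (blk_unique hp hD hB hbD hbB))
    have h2 := hE2 a b a2 b2 m1 m2 m3 ⟨A, hA, haA, ha2A⟩ ⟨B, hB, hbB, hb2B⟩ hnab
    have e : c a2 = c b := (hm A hA a2 ha2A i hi).trans (hcij.trans (hm B hB j hj b hbB))
    exact G.irrefl2 (c b) (e ▸ h2)
  · have hnab : ¬ SameBlock σ a b := by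
      rintro ⟨D, hD, haD, hbD⟩
      exact hne ((blk_unique hp hA hD hbA hbD).trans (blk_unique hp hD hB haD haB))
    have h2 := hE2 a b a2 b2 m1 m2 m3 ⟨B, hB, haB, ha2B⟩ ⟨A, hA, hbA, hb2A⟩ hnab
    have e : c a2 = c b := (hm B hB a2 ha2B j hj).trans (hcij.symm.trans (hm A hA i hi b hbA))
    exact G.irrefl2 (c b) (e ▸ h2)

lemma env_min (hπ : Setoid.IsPartition π) (hmono : Monochromatic c π) :
    ∀ σ' : Set (Set (Fin k)), Setoid.IsPartition σ' → Coarser π σ' → Monochromatic c σ' →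
      ColorwiseNonCrossing c σ' → Coarser (env c π) σ' := by
  intro σ' hσ' hco hm hnc
  have aux : ∀ x y : Fin k, EqvGen (Lk c π) x y → SameBlock σ' x y := by
    intro x y hxy
    induction hxy with
    | refl x =>
      obtain ⟨D, ⟨hD, hxD⟩, _⟩ := hσ'.2 x
      exact ⟨D, hD, hxD, hxD⟩
    | symm x y h ih => obtain ⟨D, hD, h1, h2⟩ := ih; exact ⟨D, hD, h2, h1⟩
    | trans x y z h1 h2 ih1 ih2 =>
      obtain ⟨D1, hD1, hx1, hy1⟩ := ih1
      obtain ⟨D2, hD2, hy2, hz2⟩ := ih2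
      exact ⟨D1, hD1, hx1, (blk_unique hσ' hD2 hD1 hy2 hy1) ▸ hz2⟩
    | rel x y h =>
      rcases h with ⟨D, hD, hx, hy⟩ | ⟨hcxy, A, hA, B, hB, hxA, hyB, hcr⟩
      · obtain ⟨D', hD', hsub⟩ := hco D hD
        exact ⟨D', hD', hsub hx, hsub hy⟩
      · obtain ⟨DA, hDA, hsubA⟩ := hco A hA
        obtain ⟨DB, hDB, hsubB⟩ := hco B hB
        by_cases hDD : DA = DB
        · exact ⟨DA, hDA, hsubA hxA, hDD ▸ hsubB hyB⟩
        · exact absurd (crossing_mono hsubA hsubB hcr)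
            (hnc DA hDA DB hDB hDD ⟨x, hsubA hxA, y, hsubB hyB, hcxy⟩)
  rintro C ⟨y0, rfl⟩
  obtain ⟨D, ⟨hD, hy0D⟩, _⟩ := hσ'.2 y0
  refine ⟨D, hD, fun t ht => ?_⟩
  obtain ⟨D2, hD2, ht2, hy02⟩ := aux t y0 ht
  exact (blk_unique hσ' hD hD2 hy0D hy02) ▸ ht2

lemma coarser_antisymm_aux (hσ : Setoid.IsPartition σ) (hσ' : Setoid.IsPartition σ')
    (h1 : Coarser σ σ') (h2 : Coarser σ' σ) : ∀ A ∈ σ, A ∈ σ' := by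
  intro A hA
  obtain ⟨B, hB, hAB⟩ := h1 A hA
  obtain ⟨A2, hA2, hBA2⟩ := h2 B hB
  obtain ⟨a, ha⟩ : A.Nonempty := Set.nonempty_iff_ne_empty.mpr (fun h => hσ.1 (h ▸ hA))
  have : A = A2 := blk_unique hσ hA hA2 ha (hBA2 (hAB ha))
  have hBA : B = A := subset_antisymm (this ▸ hBA2) hAB
  exact hBA ▸ hB

lemma env_unique (h : IsCwNCEnv c π σ) (h' : IsCwNCEnv c π σ') : σ = σ' := by
  obtain ⟨hp, hco, hm, hnc, hmin⟩ := h
  obtain ⟨hp', hco', hm', hnc', hmin'⟩ := h'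
  exact Set.eq_of_subset_of_subset
    (fun A hA => coarser_antisymm_aux hp hp' (hmin σ' hp' hco' hm' hnc') (hmin' σ hp hco hm hnc) A hA)
    (fun A hA => coarser_antisymm_aux hp' hp (hmin' σ hp hco hm hnc) (hmin σ' hp' hco' hm' hnc') A hA)

lemma env_isEnv (hpt : MemPt G c π) : IsCwNCEnv c π (env c π) :=
  ⟨env_isPartition, coarser_env hpt.1, env_mono hpt.2.1,
    memP_cwNC (memP_env hpt), env_min hpt.1 hpt.2.1⟩

end CDB

namespace CDB
open Relation
variable {V : Type} {k : ℕ} {c : Fin k → V} {π σ : Set (Set (Fin k))} {G : Bigraph V}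
variable {f : Set (Fin k) → Set (Set (Fin k))}

lemma partOn_rst (hπ : Setoid.IsPartition π) (hσp : Setoid.IsPartition σ)
    (hco : Coarser π σ) {B : Set (Fin k)} (hB : B ∈ σ) :
    PartOn B {A | A ∈ π ∧ A ⊆ B} := by
  refine ⟨fun h => hπ.1 h.1, fun A h => h.2, ?_⟩
  intro a haB
  obtain ⟨A, ⟨hA, haA⟩, hu⟩ := hπ.2 a
  obtain ⟨B', hB', hsub⟩ := hco A hA
  have hBB : B' = B := blk_unique hσp hB' hB (hsub haA) haB
  refine ⟨A, ⟨⟨hA, hBB ▸ hsub⟩, haA⟩, ?_⟩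
  rintro A' ⟨⟨hA', _⟩, haA'⟩
  exact hu A' ⟨hA', haA'⟩

lemma env_connected (hπ : Setoid.IsPartition π) {B : Set (Fin k)} (hB : B ∈ env c π) :
    ConnectedOn B {A | A ∈ π ∧ A ⊆ B} := by
  obtain ⟨y0, rfl⟩ := hB
  show ConnectedOn {x | E c π x y0} {A | A ∈ π ∧ A ⊆ {x | E c π x y0}}
  intro τ hτ hcoar hnc
  set B : Set (Fin k) := {x | E c π x y0} with hBdef
  have hblk : ∀ D ∈ π, ∀ x ∈ D, x ∈ B → D ⊆ B := by
    intro D hD x hx hxB t ht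
    exact Etrans (sameBlock_E ⟨D, hD, ht, hx⟩) hxB
  have aux : ∀ x y : Fin k, EqvGen (Lk c π) x y → x ∈ B → SameBlock τ x y := by
    intro x y hxy
    induction hxy with
    | refl x =>
      intro hxB
      obtain ⟨T, ⟨hT, hxT⟩, _⟩ := hτ.2.2 x hxB
      exact ⟨T, hT, hxT, hxT⟩
    | symm x y h ih =>
      intro hyB
      have hxB : x ∈ B := Etrans (h : E c π x y) hyB
      obtain ⟨T, hT, h1, h2⟩ := ih hxB
      exact ⟨T, hT, h2, h1⟩
    | trans x y z h1 h2 ih1 ih2 =>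
      intro hxB
      have hyB : y ∈ B := Etrans (Esymm (h1 : E c π x y)) hxB
      obtain ⟨T1, hT1, hx1, hy1⟩ := ih1 hxB
      obtain ⟨T2, hT2, hy2, hz2⟩ := ih2 hyB
      obtain ⟨T, _, huT⟩ := hτ.2.2 y hyB
      have e1 : T1 = T := huT T1 ⟨hT1, hy1⟩
      have e2 : T2 = T := huT T2 ⟨hT2, hy2⟩
      exact ⟨T1, hT1, hx1, (e1.trans e2.symm) ▸ hz2⟩
    | rel x y h =>
      intro hxB
      have hyB : y ∈ B := Etrans (Esymm (Erel h)) hxB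
      rcases h with ⟨D, hD, hx, hy⟩ | ⟨hcxy, A, hA, A', hA', hxA, hyA', hcr⟩
      · obtain ⟨T, hT, hsub⟩ := hcoar D ⟨hD, hblk D hD x hx hxB⟩
        exact ⟨T, hT, hsub hx, hsub hy⟩
      · obtain ⟨T, hT, hsub⟩ := hcoar A ⟨hA, hblk A hA x hxA hxB⟩
        obtain ⟨T', hT', hsub'⟩ := hcoar A' ⟨hA', hblk A' hA' y hyA' hyB⟩
        by_cases hTT : T = T'
        · exact ⟨T, hT, hsub hxA, hTT ▸ hsub' hyA'⟩
        · exact absurd (crossing_mono hsub hsub' hcr) (hnc T hT T' hT' hTT)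
  have hy0B : y0 ∈ B := Erefl y0
  obtain ⟨T, ⟨hT, hy0T⟩, huT⟩ := hτ.2.2 y0 hy0B
  have hBT : B ⊆ T := by
    intro x hxB
    obtain ⟨T2, hT2, hy02, hx2⟩ := aux y0 x (Esymm hxB) hy0B
    exact (huT T2 ⟨hT2, hy02⟩) ▸ hx2
  exact (subset_antisymm hBT (hτ.2.1 T hT)) ▸ hT

lemma mem_bU {A : Set (Fin k)} :
    A ∈ (⋃ B ∈ σ, f B) ↔ ∃ B ∈ σ, A ∈ f B := by simp

lemma union_partition (hσp : Setoid.IsPartition σ) (hf : ∀ B ∈ σ, PartOn B (f B)) :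
    Setoid.IsPartition (⋃ B ∈ σ, f B) := by
  constructor
  · intro h
    obtain ⟨B, hB, h0⟩ := mem_bU.mp h
    exact (hf B hB).1 h0
  · intro a
    obtain ⟨B, ⟨hB, haB⟩, huB⟩ := hσp.2 a
    obtain ⟨A, ⟨hA, haA⟩, huA⟩ := (hf B hB).2.2 a haB
    refine ⟨A, ⟨mem_bU.mpr ⟨B, hB, hA⟩, haA⟩, ?_⟩
    rintro A' ⟨hA'U, haA'⟩
    obtain ⟨B', hB', hA'⟩ := mem_bU.mp hA'U
    have hBB : B' = B := huB B' ⟨hB', (hf B' hB').2.1 A' hA' haA'⟩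
    exact huA A' ⟨hBB ▸ hA', haA'⟩

lemma sameBlock_union (hf : ∀ B ∈ σ, PartOn B (f B)) {i j : Fin k}
    (h : SameBlock (⋃ B ∈ σ, f B) i j) : SameBlock σ i j := by
  obtain ⟨A, hAU, hi, hj⟩ := h
  obtain ⟨B, hB, hA⟩ := mem_bU.mp hAU
  exact ⟨B, hB, (hf B hB).2.1 A hA hi, (hf B hB).2.1 A hA hj⟩

lemma mapsTo_memPt (hσ : MemP G c σ) (hf : ∀ B ∈ σ, PartOn B (f B)) :
    MemPt G c (⋃ B ∈ σ, f B) := by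
  obtain ⟨hσp, hσm, hσ1, hσ2⟩ := hσ
  refine ⟨union_partition hσp hf, ?_, ?_, ?_⟩
  · rintro A hAU i hi j hj
    obtain ⟨B, hB, hA⟩ := mem_bU.mp hAU
    exact hσm B hB i ((hf B hB).2.1 A hA hi) j ((hf B hB).2.1 A hA hj)
  · intro i1 j i2 h1 h2 hsb
    exact hσ1 i1 j i2 h1 h2 (sameBlock_union hf hsb)
  · intro i1 j1 i2 j2 l1 l2 l3 hs1 hs2 _
    obtain ⟨B, hB, hi1, hi2⟩ := sameBlock_union hf hs1
    obtain ⟨B', hB', hj1, hj2⟩ := sameBlock_union hf hs2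
    by_cases hBB : B = B'
    · exact Or.inr (hσm B hB i2 hi2 j1 (hBB ▸ hj1))
    · refine Or.inl (hσ2 i1 j1 i2 j2 l1 l2 l3 ⟨B, hB, hi1, hi2⟩ ⟨B', hB', hj1, hj2⟩ ?_)
      rintro ⟨D, hD, hi1D, hj1D⟩
      exact hBB ((blk_unique hσp hB hD hi1 hi1D).trans (blk_unique hσp hD hB' hj1D hj1))

lemma domain_isEnv (hσ : MemP G c σ)
    (hf : ∀ B ∈ σ, PartOn B (f B) ∧ ConnectedOn B (f B)) :
    IsCwNCEnv c (⋃ B ∈ σ, f B) σ := by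
  have hf1 : ∀ B ∈ σ, PartOn B (f B) := fun B hB => (hf B hB).1
  refine ⟨hσ.1, ?_, hσ.2.1, memP_cwNC hσ, ?_⟩
  · intro A hAU
    obtain ⟨B, hB, hA⟩ := mem_bU.mp hAU
    exact ⟨B, hB, (hf1 B hB).2.1 A hA⟩
  · intro σ'' hσ'' hco'' hm'' hnc''
    intro B hB
    set τ : Set (Set (Fin k)) := {T | ∃ D ∈ σ'', T = D ∩ B ∧ T.Nonempty} with hτdef
    have hτpart : PartOn B τ := by
      refine ⟨?_, ?_, ?_⟩
      · rintro ⟨D, hD, _, hne⟩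
        exact Set.not_nonempty_empty hne
      · rintro T ⟨D, hD, rfl, _⟩
        exact Set.inter_subset_right
      · intro a haB
        obtain ⟨D, ⟨hD, haD⟩, huD⟩ := hσ''.2 a
        refine ⟨D ∩ B, ⟨⟨D, hD, rfl, ⟨a, haD, haB⟩⟩, haD, haB⟩, ?_⟩
        rintro T ⟨⟨D', hD', rfl, _⟩, haD', haB'⟩
        rw [huD D' ⟨hD', haD'⟩]
    have hτco : Coarser (f B) τ := by
      intro A hA
      have hAU : A ∈ ⋃ B ∈ σ, f B := mem_bU.mpr ⟨B, hB, hA⟩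
      obtain ⟨D, hD, hsub⟩ := hco'' A hAU
      have hAB : A ⊆ B := (hf1 B hB).2.1 A hA
      obtain ⟨a, ha⟩ : A.Nonempty :=
        Set.nonempty_iff_ne_empty.mpr (fun h => (hf1 B hB).1 (h ▸ hA))
      exact ⟨D ∩ B, ⟨D, hD, rfl, ⟨a, hsub ha, hAB ha⟩⟩,
        fun t ht => ⟨hsub ht, hAB ht⟩⟩
    have hτnc : NonCrossingPart τ := by
      rintro T ⟨D, hD, rfl, hne⟩ T' ⟨D', hD', rfl, hne'⟩ hTT hcr
      have hDD : D ≠ D' := fun h => hTT (h ▸ rfl)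
      obtain ⟨t, htD, htB⟩ := hne
      obtain ⟨t', htD', htB'⟩ := hne'
      exact hnc'' D hD D' hD' hDD ⟨t, htD, t', htD', hσ.2.1 B hB t htB t' htB'⟩
        (crossing_mono Set.inter_subset_left Set.inter_subset_left hcr)
    obtain ⟨D, hD, hBeq, _⟩ := (hf B hB).2 τ hτpart hτco hτnc
    exact ⟨D, hD, hBeq.le.trans Set.inter_subset_left⟩

lemma fB_eq (hσ : MemP G c σ) (hf : ∀ B ∈ σ, PartOn B (f B)) {B : Set (Fin k)}
    (hB : B ∈ σ) : f B = {A | A ∈ (⋃ B ∈ σ, f B) ∧ A ⊆ B} := by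
  ext A
  constructor
  · intro hA
    exact ⟨mem_bU.mpr ⟨B, hB, hA⟩, (hf B hB).2.1 A hA⟩
  · rintro ⟨hAU, hAB⟩
    obtain ⟨B2, hB2, hA2⟩ := mem_bU.mp hAU
    obtain ⟨a, ha⟩ : A.Nonempty :=
      Set.nonempty_iff_ne_empty.mpr (fun h => (hf B2 hB2).1 (h ▸ hA2))
    have : B2 = B := blk_unique hσ.1 hB2 hB ((hf B2 hB2).2.1 A hA2 ha) (hAB ha)
    exact this ▸ hA2

end CDB

namespace CDB
open Relation
variable {V : Type} {k : ℕ} {c : Fin k → V} {π σ : Set (Set (Fin k))} {G : Bigraph V}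

/-- The restriction map: blocks of `π` inside a block of the envelope. -/
def fres (c : Fin k → V) (π : Set (Set (Fin k))) : Set (Fin k) → Set (Set (Fin k)) :=
  fun B => {A | A ∈ π ∧ A ⊆ B ∧ B ∈ env c π}

lemma fres_eq {B : Set (Fin k)} (hB : B ∈ env c π) :
    fres c π B = {A | A ∈ π ∧ A ⊆ B} :=
  Set.ext fun _ => ⟨fun ⟨h1, h2, _⟩ => ⟨h1, h2⟩, fun ⟨h1, h2⟩ => ⟨h1, h2, hB⟩⟩

lemma fres_empty {B : Set (Fin k)} (hB : B ∉ env c π) : fres c π B = ∅ :=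
  Set.eq_empty_iff_forall_notMem.mpr fun _ ⟨_, _, h3⟩ => hB h3

lemma fres_parts (hπt : MemPt G c π) :
    ∀ B ∈ env c π, PartOn B (fres c π B) ∧ ConnectedOn B (fres c π B) := by
  intro B hB
  rw [fres_eq hB]
  exact ⟨partOn_rst hπt.1 env_isPartition (coarser_env hπt.1) hB, env_connected hπt.1 hB⟩

lemma fres_union (hπt : MemPt G c π) : (⋃ B ∈ env c π, fres c π B) = π := by
  ext A
  rw [mem_bU]
  constructor
  · rintro ⟨B, hB, hA, _⟩
    exact hA
  · intro hA
    obtain ⟨a, ha⟩ : A.Nonempty :=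
      Set.nonempty_iff_ne_empty.mpr (fun h => hπt.1.1 (h ▸ hA))
    have hBenv : {x | E c π x a} ∈ env c π := ⟨a, rfl⟩
    exact ⟨{x | E c π x a}, hBenv, hA, fun t ht => sameBlock_E ⟨A, hA, ht, ha⟩, hBenv⟩

end CDB


/-- Lemma 2.29: the map `(σ, (π_B)_{B∈σ}) ↦ ⋃_{B∈σ} π_B`, where `σ ∈ P(c,G)` and each
`π_B` is a connected partition of the block `B`, is a bijection onto `P̃(c,G)`; the
inverse sends `π` to its colorwise non-crossing envelope `σ` together with the
restrictions of `π` to the blocks of `σ`. -/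
theorem connected_decomposition_bijection {V : Type} {k : ℕ} (G : Bigraph V) (c : Fin k → V) :
    Set.BijOn
      (fun p : Set (Set (Fin k)) × (Set (Fin k) → Set (Set (Fin k))) => ⋃ B ∈ p.1, p.2 B)
      {p | MemP G c p.1 ∧ (∀ B ∈ p.1, PartOn B (p.2 B) ∧ ConnectedOn B (p.2 B)) ∧
            (∀ B ∉ p.1, p.2 B = ∅)}
      {π | MemPt G c π} ∧
    ∀ π : Set (Set (Fin k)), MemPt G c π → ∀ σ : Set (Set (Fin k)), IsCwNCEnv c π σ →
      ∃ f : Set (Fin k) → Set (Set (Fin k)),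
        (MemP G c σ ∧ (∀ B ∈ σ, PartOn B (f B) ∧ ConnectedOn B (f B)) ∧
          (∀ B ∉ σ, f B = ∅)) ∧
        (∀ B ∈ σ, f B = {A | A ∈ π ∧ A ⊆ B}) ∧
        (⋃ B ∈ σ, f B) = π := by
  open CDB in
  constructor
  · refine ⟨?_, ?_, ?_⟩
    · rintro ⟨σ, f⟩ ⟨hσ, hf, _⟩
      exact mapsTo_memPt hσ (fun B hB => (hf B hB).1)
    · rintro ⟨σ, f⟩ ⟨hσ, hf, hf0⟩ ⟨σ', f'⟩ ⟨hσ', hf', hf0'⟩ heq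
      have heq' : (⋃ B ∈ σ, f B) = ⋃ B ∈ σ', f' B := heq
      have h1 := domain_isEnv hσ hf
      have h2 := domain_isEnv hσ' hf'
      rw [← heq'] at h2
      have hσeq : σ = σ' := env_unique h1 h2
      have hf1 : ∀ B ∈ σ, PartOn B (f B) := fun B hB => (hf B hB).1
      have hf1' : ∀ B ∈ σ', PartOn B (f' B) := fun B hB => (hf' B hB).1
      simp only [Prod.mk.injEq]
      refine ⟨hσeq, funext fun B => ?_⟩
      by_cases hB : B ∈ σ
      · rw [fB_eq hσ hf1 hB, heq', ← fB_eq hσ' hf1' (hσeq ▸ hB)]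
      · exact (hf0 B hB).trans (hf0' B (fun h => hB (hσeq ▸ h))).symm
    · intro π hπt
      exact ⟨(env c π, fres c π),
        ⟨memP_env hπt, fres_parts hπt, fun B hB => fres_empty hB⟩, fres_union hπt⟩
  · intro π hπt σ hσenv
    have hσeq : σ = env c π := env_unique hσenv (env_isEnv hπt)
    refine ⟨fres c π, ?_, ?_, ?_⟩
    · rw [hσeq]
      exact ⟨memP_env hπt, fres_parts hπt, fun B hB => fres_empty hB⟩
    · intro B hB
      exact fres_eq (hσeq ▸ hB)
    · rw [hσeq]
      exact fres_union hπt
end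

section
/- A partition π of [k] belongs to P(c,G) if and only if for every block B of the interval envelope of π, the restriction π|_B belongs to P(c|_B, G). (The analogous statement also holds with P(c,G)⁰ and with P̃(c,G) in place of P(c,G).) -/
/-- `π ∈ P(c|_S, G)`: the compatibility conditions for a partition of the subset `S`. -/
def MemPOn {V : Type} {k : ℕ} (G : Bigraph V) (c : Fin k → V) (S : Set (Fin k))
    (π : Set (Set (Fin k))) : Prop :=
  PartOn S π ∧ Monochromatic c π ∧
  (∀ i1 j i2 : Fin k, j ∈ S → i1 < j → j < i2 → SameBlock π i1 i2 → (c i1, c j) ∈ G.E1) ∧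
  (∀ i1 j1 i2 j2 : Fin k, i1 < j1 → j1 < i2 → i2 < j2 →
    SameBlock π i1 i2 → SameBlock π j1 j2 → ¬ SameBlock π i1 j1 → (c i2, c j1) ∈ G.E2)

/-- `π ∈ P(c|_S, G)⁰`. -/
def MemP0On {V : Type} {k : ℕ} (G : Bigraph V) (c : Fin k → V) (S : Set (Fin k))
    (π : Set (Set (Fin k))) : Prop :=
  MemPOn G c S π ∧ ∀ B ∈ π, ∀ B' ∈ π, ¬ PrecUn G c π B B'

/-- `π ∈ P̃(c|_S, G)`. -/
def MemPtOn {V : Type} {k : ℕ} (G : Bigraph V) (c : Fin k → V) (S : Set (Fin k))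
    (π : Set (Set (Fin k))) : Prop :=
  PartOn S π ∧ Monochromatic c π ∧
  (∀ i1 j i2 : Fin k, j ∈ S → i1 < j → j < i2 → SameBlock π i1 i2 → (c i1, c j) ∈ G.E1) ∧
  (∀ i1 j1 i2 j2 : Fin k, i1 < j1 → j1 < i2 → i2 < j2 →
    SameBlock π i1 i2 → SameBlock π j1 j2 → ¬ SameBlock π i1 j1 →
    ((c i2, c j1) ∈ G.E2 ∨ c i2 = c j1))

def IsInterval {k : ℕ} (A : Set (Fin k)) : Prop :=
  ∀ i ∈ A, ∀ j ∈ A, ∀ x : Fin k, i ≤ x → x ≤ j → x ∈ A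

/-- `σ` is the interval envelope of `π`: the finest interval partition coarser than `π`. -/
def IsIntervalEnv {k : ℕ} (π σ : Set (Set (Fin k))) : Prop :=
  Setoid.IsPartition σ ∧ (∀ A ∈ σ, IsInterval A) ∧ Coarser π σ ∧
  ∀ σ' : Set (Set (Fin k)), Setoid.IsPartition σ' → (∀ A ∈ σ', IsInterval A) →
    Coarser π σ' → Coarser σ σ'

/-- A partition belongs to `P(c,G)` iff its restriction to each block of its interval
envelope does; and analogously for `P(c,G)⁰` and `P̃(c,G)`. -/
theorem mem_P_iff_restrictions_to_interval_envelope {V : Type} {k : ℕ} (G : Bigraph V)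
    (c : Fin k → V) (π σ : Set (Set (Fin k))) (hπ : Setoid.IsPartition π)
    (hσ : IsIntervalEnv π σ) :
    (MemPOn G c Set.univ π ↔ ∀ B ∈ σ, MemPOn G c B {A | A ∈ π ∧ A ⊆ B}) ∧
    (MemP0On G c Set.univ π ↔ ∀ B ∈ σ, MemP0On G c B {A | A ∈ π ∧ A ⊆ B}) ∧
    (MemPtOn G c Set.univ π ↔ ∀ B ∈ σ, MemPtOn G c B {A | A ∈ π ∧ A ⊆ B}) := by
  obtain ⟨hσp, hint, hco, -⟩ := hσ
  -- unique block of a partition containing a given point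
  have hexu : ∀ (τ : Set (Set (Fin k))), Setoid.IsPartition τ → ∀ a : Fin k,
      ∃! A, A ∈ τ ∧ a ∈ A := by
    intro τ hτ a
    obtain ⟨b, ⟨hb, hab⟩, hu⟩ := hτ.2 a
    exact ⟨b, ⟨hb, hab⟩, fun y hy => hu y ⟨hy.1, hy.2⟩⟩
  have hσuniq : ∀ {B B' : Set (Fin k)}, B ∈ σ → B' ∈ σ → ∀ {a : Fin k},
      a ∈ B → a ∈ B' → B = B' := by
    intro B B' hB hB' a ha ha'
    obtain ⟨b, -, hu⟩ := hexu σ hσp a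
    rw [hu B ⟨hB, ha⟩, hu B' ⟨hB', ha'⟩]
  -- a block of π meeting a block of σ is contained in it
  have hblk : ∀ {A : Set (Fin k)}, A ∈ π → ∀ {B}, B ∈ σ → ∀ {x}, x ∈ A → x ∈ B →
      A ⊆ B := by
    intro A hA B hB x hxA hxB
    obtain ⟨B', hB', hAB'⟩ := hco A hA
    rwa [hσuniq hB hB' hxB (hAB' hxA)]
  -- a set nested inside A ⊆ B is contained in B (intervals)
  have hnest : ∀ {A A' B : Set (Fin k)}, B ∈ σ → A ⊆ B → NestedIn A' A → A' ⊆ B := by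
    rintro A A' B hB hAB ⟨i, hi, j, hj, -, -, hx⟩ x hx'
    exact hint B hB i (hAB hi) j (hAB hj) x (hx x hx').1.le (hx x hx').2.le
  have hsb_fwd : ∀ {B : Set (Fin k)} {i j}, SameBlock {A | A ∈ π ∧ A ⊆ B} i j →
      SameBlock π i j := by
    rintro B i j ⟨A, hA, h1, h2⟩; exact ⟨A, hA.1, h1, h2⟩
  have hsb_bwd : ∀ {B : Set (Fin k)}, B ∈ σ → ∀ {i j : Fin k}, i ∈ B →
      SameBlock π i j → SameBlock {A | A ∈ π ∧ A ⊆ B} i j := by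
    rintro B hB i j hiB ⟨A, hA, h1, h2⟩
    exact ⟨A, ⟨hA, hblk hA hB h1 hiB⟩, h1, h2⟩
  -- the restriction is a partition of B
  have hPart : ∀ B ∈ σ, PartOn B {A | A ∈ π ∧ A ⊆ B} := by
    intro B hB
    refine ⟨fun h => hπ.1 h.1, fun A hA => hA.2, fun a ha => ?_⟩
    obtain ⟨A, ⟨hA, haA⟩, hu⟩ := hexu π hπ a
    exact ⟨A, ⟨⟨hA, hblk hA hB haA ha⟩, haA⟩, fun y hy => hu y ⟨hy.1.1, hy.2⟩⟩
  -- the iff for P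
  have hPiff : MemPOn G c Set.univ π ↔ ∀ B ∈ σ, MemPOn G c B {A | A ∈ π ∧ A ⊆ B} := by
    constructor
    · rintro ⟨-, hmono, h1, h2⟩ B hB
      refine ⟨hPart B hB, fun A hA => hmono A hA.1, ?_, ?_⟩
      · intro i1 j i2 _ ha hb hsb
        exact h1 i1 j i2 (Set.mem_univ j) ha hb (hsb_fwd hsb)
      · intro i1 j1 i2 j2 ha hb hc hs1 hs2 hns
        refine h2 i1 j1 i2 j2 ha hb hc (hsb_fwd hs1) (hsb_fwd hs2) fun hsg => ?_
        obtain ⟨A, hA, hi1, -⟩ := hs1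
        exact hns (hsb_bwd hB (hA.2 hi1) hsg)
    · intro h
      refine ⟨⟨hπ.1, fun A _ => Set.subset_univ A, fun a _ => hexu π hπ a⟩, ?_, ?_, ?_⟩
      · intro A hA i hi j hj
        obtain ⟨B, hB, hAB⟩ := hco A hA
        exact (h B hB).2.1 A ⟨hA, hAB⟩ i hi j hj
      · rintro i1 j i2 - ha hb ⟨A, hA, hi1, hi2⟩
        obtain ⟨B, hB, hAB⟩ := hco A hA
        have hjB : j ∈ B := hint B hB i1 (hAB hi1) i2 (hAB hi2) j ha.le hb.le
        exact (h B hB).2.2.1 i1 j i2 hjB ha hb ⟨A, ⟨hA, hAB⟩, hi1, hi2⟩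
      · intro i1 j1 i2 j2 ha hb hc hs1 hs2 hns
        obtain ⟨A, hA, hi1, hi2⟩ := hs1
        obtain ⟨B, hB, hAB⟩ := hco A hA
        have hj1B : j1 ∈ B := hint B hB i1 (hAB hi1) i2 (hAB hi2) j1 ha.le hb.le
        exact (h B hB).2.2.2 i1 j1 i2 j2 ha hb hc ⟨A, ⟨hA, hAB⟩, hi1, hi2⟩
          (hsb_bwd hB hj1B hs2) fun hsg => hns (hsb_fwd hsg)
  -- the iff for Pt (same proof)
  have hPtiff : MemPtOn G c Set.univ π ↔ ∀ B ∈ σ, MemPtOn G c B {A | A ∈ π ∧ A ⊆ B} := by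
    constructor
    · rintro ⟨-, hmono, h1, h2⟩ B hB
      refine ⟨hPart B hB, fun A hA => hmono A hA.1, ?_, ?_⟩
      · intro i1 j i2 _ ha hb hsb
        exact h1 i1 j i2 (Set.mem_univ j) ha hb (hsb_fwd hsb)
      · intro i1 j1 i2 j2 ha hb hc hs1 hs2 hns
        refine h2 i1 j1 i2 j2 ha hb hc (hsb_fwd hs1) (hsb_fwd hs2) fun hsg => ?_
        obtain ⟨A, hA, hi1, -⟩ := hs1
        exact hns (hsb_bwd hB (hA.2 hi1) hsg)
    · intro h
      refine ⟨⟨hπ.1, fun A _ => Set.subset_univ A, fun a _ => hexu π hπ a⟩, ?_, ?_, ?_⟩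
      · intro A hA i hi j hj
        obtain ⟨B, hB, hAB⟩ := hco A hA
        exact (h B hB).2.1 A ⟨hA, hAB⟩ i hi j hj
      · rintro i1 j i2 - ha hb ⟨A, hA, hi1, hi2⟩
        obtain ⟨B, hB, hAB⟩ := hco A hA
        have hjB : j ∈ B := hint B hB i1 (hAB hi1) i2 (hAB hi2) j ha.le hb.le
        exact (h B hB).2.2.1 i1 j i2 hjB ha hb ⟨A, ⟨hA, hAB⟩, hi1, hi2⟩
      · intro i1 j1 i2 j2 ha hb hc hs1 hs2 hns
        obtain ⟨A, hA, hi1, hi2⟩ := hs1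
        obtain ⟨B, hB, hAB⟩ := hco A hA
        have hj1B : j1 ∈ B := hint B hB i1 (hAB hi1) i2 (hAB hi2) j1 ha.le hb.le
        exact (h B hB).2.2.2 i1 j1 i2 j2 ha hb hc ⟨A, ⟨hA, hAB⟩, hi1, hi2⟩
          (hsb_bwd hB hj1B hs2) fun hsg => hns (hsb_fwd hsg)
  -- the PrecUn condition
  have hPrec : (∀ A ∈ π, ∀ A' ∈ π, ¬ PrecUn G c π A A') ↔
      ∀ B ∈ σ, ∀ A ∈ {A | A ∈ π ∧ A ⊆ B}, ∀ A' ∈ {A | A ∈ π ∧ A ⊆ B},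
        ¬ PrecUn G c {A | A ∈ π ∧ A ⊆ B} A A' := by
    constructor
    · rintro h B hB A hA A' hA' ⟨hne, hcol, hni, hcond⟩
      refine h A hA.1 A' hA'.1 ⟨hne, hcol, hni, ?_⟩
      intro B'' hB'' hn1 hn2
      exact hcond B'' ⟨hB'', hnest hB hA.2 hn1⟩ hn1 hn2
    · rintro h A hA A' hA' ⟨hne, hcol, hni, hcond⟩
      obtain ⟨B, hB, hAB⟩ := hco A hA
      refine h B hB A ⟨hA, hAB⟩ A' ⟨hA', hnest hB hAB hni⟩ ⟨hne, hcol, hni, ?_⟩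
      intro B'' hB'' hn1 hn2
      exact hcond B'' hB''.1 hn1 hn2
  refine ⟨hPiff, ?_, hPtiff⟩
  constructor
  · rintro ⟨hP, hQ⟩ B hB
    exact ⟨hPiff.1 hP B hB, hPrec.1 hQ B hB⟩
  · intro h
    exact ⟨hPiff.2 fun B hB => (h B hB).1, hPrec.2 fun B hB => (h B hB).2⟩
end

section
/- There is a bijection between the set of partitions of [k] and the set of pairs (σ, (π_B)_{B∈σ}) where σ is an interval partition of [k] and each π_B is an irreducible partition of the block B, given by sending π to (its interval envelope, its restrictions to the envelope's blocks). -/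
/-- `P` is irreducible: its blocks cannot be split into a nonempty left part and a
nonempty right part (interval envelope is the one-block partition). -/
def IrreducibleOn {k : ℕ} (P : Set (Set (Fin k))) : Prop :=
  ∀ j : Fin k, (∀ A ∈ P, (∀ x ∈ A, x ≤ j) ∨ (∀ x ∈ A, j < x)) →
    (∀ A ∈ P, ∀ x ∈ A, x ≤ j) ∨ (∀ A ∈ P, ∀ x ∈ A, j < x)

namespace IID
variable {k : ℕ}

lemma exists_max {S : Set (Fin k)} (h : S.Nonempty) : ∃ m ∈ S, ∀ x ∈ S, x ≤ m := by
  obtain ⟨m, hm, hmax⟩ := Set.Finite.exists_maximalFor id S S.toFinite h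
  exact ⟨m, hm, fun x hx => le_of_not_gt fun hlt => absurd (hmax hx hlt.le) (not_le.mpr hlt)⟩

lemma blocks_eq {σ : Set (Set (Fin k))} (hp : Setoid.IsPartition σ) {B C : Set (Fin k)}
    (hB : B ∈ σ) (hC : C ∈ σ) {a : Fin k} (haB : a ∈ B) (haC : a ∈ C) : B = C := by
  obtain ⟨D, _, huniq⟩ := hp.2 a
  rw [huniq B ⟨hB, haB⟩, huniq C ⟨hC, haC⟩]

lemma block_nonempty {σ : Set (Set (Fin k))} (hp : Setoid.IsPartition σ) {B : Set (Fin k)}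
    (hB : B ∈ σ) : B.Nonempty := by
  rcases Set.eq_empty_or_nonempty B with h | h
  · exact absurd (h ▸ hB) hp.1
  · exact h

def Cut (π : Set (Set (Fin k))) (j : Fin k) : Prop :=
  ∀ A ∈ π, (∀ x ∈ A, x ≤ j) ∨ (∀ x ∈ A, j < x)

def Rel (π : Set (Set (Fin k))) (i j : Fin k) : Prop :=
  ∀ c : Fin k, Cut π c → (i ≤ c ↔ j ≤ c)

lemma Rel.refl (π : Set (Set (Fin k))) (i : Fin k) : Rel π i i := fun _ _ => Iff.rfl
lemma Rel.symm {π : Set (Set (Fin k))} {i j : Fin k} (h : Rel π i j) : Rel π j i :=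
  fun c hc => (h c hc).symm
lemma Rel.trans {π : Set (Set (Fin k))} {i j l : Fin k} (h : Rel π i j) (h' : Rel π j l) :
    Rel π i l := fun c hc => (h c hc).trans (h' c hc)

def cls (π : Set (Set (Fin k))) (i : Fin k) : Set (Fin k) := {j | Rel π i j}

lemma mem_cls_self (π : Set (Set (Fin k))) (i : Fin k) : i ∈ cls π i := Rel.refl π i

lemma cls_eq {π : Set (Set (Fin k))} {i j : Fin k} (h : Rel π i j) : cls π i = cls π j := by
  ext x; exact ⟨fun hx => h.symm.trans hx, fun hx => h.trans hx⟩

def env (π : Set (Set (Fin k))) : Set (Set (Fin k)) := {B | ∃ i, B = cls π i}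

lemma env_partition (π : Set (Set (Fin k))) : Setoid.IsPartition (env π) := by
  constructor
  · rintro ⟨i, hi⟩
    exact (hi ▸ mem_cls_self π i : i ∈ (∅ : Set (Fin k)))
  · intro a
    refine ⟨cls π a, ⟨⟨a, rfl⟩, mem_cls_self π a⟩, ?_⟩
    rintro B ⟨⟨i, rfl⟩, haB⟩
    exact cls_eq haB

lemma env_interval (π : Set (Set (Fin k))) : ∀ A ∈ env π, IsInterval A := by
  rintro A ⟨i, rfl⟩ a ha b hb x hax hxb c hc
  constructor
  · intro hic
    exact le_trans hxb (((hb c hc).mp hic))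
  · intro hxc
    exact (ha c hc).mpr (le_trans hax hxc)

lemma env_coarser {π : Set (Set (Fin k))} (hπ : Setoid.IsPartition π) : Coarser π (env π) := by
  intro A hA
  obtain ⟨a, ha⟩ := block_nonempty hπ hA
  refine ⟨cls π a, ⟨a, rfl⟩, fun b hb c hc => ?_⟩
  rcases hc A hA with h | h
  · simp [h a ha, h b hb]
  · simp [not_le.mpr (h a ha), not_le.mpr (h b hb)]

/-- separation lemma, one-sided -/
lemma sep_lt {π σ' : Set (Set (Fin k))} (hp : Setoid.IsPartition σ')
    (hint : ∀ A ∈ σ', IsInterval A) (hc : Coarser π σ')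
    {u v : Fin k} {U : Set (Fin k)} (hU : U ∈ σ') (hu : u ∈ U) (hv : v ∉ U)
    (huv : u < v) : ∃ j, Cut π j ∧ u ≤ j ∧ j < v := by
  obtain ⟨m, hm, hmax⟩ := exists_max ⟨u, hu⟩
  refine ⟨m, ?_, hmax u hu, ?_⟩
  · intro A hA
    obtain ⟨C, hC, hAC⟩ := hc A hA
    by_cases h : ∀ x ∈ A, x ≤ m
    · exact Or.inl h
    · push_neg at h
      obtain ⟨y, hy, hmy⟩ := h
      refine Or.inr fun x hx => ?_
      by_contra hxm
      push_neg at hxm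
      have hmC : m ∈ C := hint C hC x (hAC hx) y (hAC hy) m hxm hmy.le
      have : C = U := blocks_eq hp hC hU hmC hm
      exact absurd (hmax y (this ▸ hAC hy)) (not_le.mpr hmy)
  · by_contra h
    push_neg at h
    exact hv (hint U hU u hu m hm v huv.le h)

lemma sep {π σ' : Set (Set (Fin k))} (hp : Setoid.IsPartition σ')
    (hint : ∀ A ∈ σ', IsInterval A) (hc : Coarser π σ')
    {a b : Fin k} {B' : Set (Fin k)} (hB' : B' ∈ σ') (ha : a ∈ B') (hb : b ∉ B') :
    ∃ j, Cut π j ∧ ((a ≤ j ∧ j < b) ∨ (b ≤ j ∧ j < a)) := by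
  rcases lt_trichotomy a b with h | h | h
  · obtain ⟨j, hj, h1, h2⟩ := sep_lt hp hint hc hB' ha hb h
    exact ⟨j, hj, Or.inl ⟨h1, h2⟩⟩
  · exact absurd (h ▸ ha) hb
  · obtain ⟨V, ⟨hV, hbV⟩, -⟩ := hp.2 b
    have haV : a ∉ V := fun haV => hb ((blocks_eq hp hV hB' haV ha) ▸ hbV)
    obtain ⟨j, hj, h1, h2⟩ := sep_lt hp hint hc hV hbV haV h
    exact ⟨j, hj, Or.inr ⟨h1, h2⟩⟩

lemma env_isEnv {π : Set (Set (Fin k))} (hπ : Setoid.IsPartition π) :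
    IsIntervalEnv π (env π) := by
  refine ⟨env_partition π, env_interval π, env_coarser hπ, ?_⟩
  rintro σ' hp' hint' hc' B ⟨i, rfl⟩
  obtain ⟨B', ⟨hB', hiB'⟩, -⟩ := hp'.2 i
  refine ⟨B', hB', fun b hb => ?_⟩
  by_contra hbB'
  obtain ⟨j, hj, hcase⟩ := sep hp' hint' hc' hB' hiB' hbB'
  have hiff := (hb : Rel π i b) j hj
  rcases hcase with ⟨h1, h2⟩ | ⟨h1, h2⟩
  · exact absurd (hiff.mp h1) (not_le.mpr h2)
  · exact absurd (hiff.mpr h1) (not_le.mpr h2)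

lemma coarser_sub {σ₁ σ₂ : Set (Set (Fin k))} (h1 : Setoid.IsPartition σ₁)
    (c12 : Coarser σ₁ σ₂) (c21 : Coarser σ₂ σ₁) : σ₁ ⊆ σ₂ := by
  intro A hA
  obtain ⟨B, hB, hAB⟩ := c12 A hA
  obtain ⟨A', hA', hBA'⟩ := c21 B hB
  obtain ⟨a, ha⟩ := block_nonempty h1 hA
  have : A = A' := blocks_eq h1 hA hA' ha (hBA' (hAB ha))
  have hAB' : A = B := Set.Subset.antisymm hAB (this ▸ hBA')
  exact hAB' ▸ hB

lemma env_unique {π σ₁ σ₂ : Set (Set (Fin k))} (h1 : IsIntervalEnv π σ₁)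
    (h2 : IsIntervalEnv π σ₂) : σ₁ = σ₂ := by
  have c12 := h1.2.2.2 σ₂ h2.1 h2.2.1 h2.2.2.1
  have c21 := h2.2.2.2 σ₁ h1.1 h1.2.1 h1.2.2.1
  exact Set.Subset.antisymm (coarser_sub h1.1 c12 c21) (coarser_sub h2.1 c21 c12)

/-- key: the restriction of `π` to an envelope block is an irreducible partition of it -/
lemma restrict_partOn {π σ : Set (Set (Fin k))} (hπ : Setoid.IsPartition π)
    (hσ : IsIntervalEnv π σ) {B : Set (Fin k)} (hB : B ∈ σ) :
    PartOn B {A | A ∈ π ∧ A ⊆ B} := by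
  refine ⟨fun h => hπ.1 h.1, fun A hA => hA.2, fun a ha => ?_⟩
  obtain ⟨A, ⟨hA, haA⟩, huniq⟩ := hπ.2 a
  obtain ⟨C, hC, hAC⟩ := hσ.2.2.1 A hA
  have : C = B := blocks_eq hσ.1 hC hB (hAC haA) ha
  refine ⟨A, ⟨⟨hA, this ▸ hAC⟩, haA⟩, ?_⟩
  rintro A' ⟨⟨hA', -⟩, haA'⟩
  exact huniq A' ⟨hA', haA'⟩

lemma restrict_irred {π σ : Set (Set (Fin k))} (hπ : Setoid.IsPartition π)
    (hσ : IsIntervalEnv π σ) {B : Set (Fin k)} (hB : B ∈ σ) :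
    IrreducibleOn {A | A ∈ π ∧ A ⊆ B} := by
  have hσe : σ = env π := env_unique hσ (env_isEnv hπ)
  subst hσe
  obtain ⟨i, rfl⟩ := hB
  intro j hj
  by_cases hy : ∃ y ∈ cls π i, j < y
  · obtain ⟨y, hyB, hjy⟩ := hy
    refine Or.inr fun A hA x hx => ?_
    rcases hj A hA with hle | hgt
    · -- contradiction: x ∈ A ≤ j, y > j, both in the class
      exfalso
      have hxB : x ∈ cls π i := hA.2 hx
      have hxj : x ≤ j := hle x hx
      -- j is a cut of π
      have hcut : Cut π j := by
        intro A' hA'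
        obtain ⟨C, ⟨i', rfl⟩, hAC⟩ := env_coarser hπ A' hA'
        by_cases hCB : cls π i' = cls π i
        · exact hj A' ⟨hA', hCB ▸ hAC⟩
        · by_cases h : ∀ z ∈ A', z ≤ j
          · exact Or.inl h
          · push_neg at h
            obtain ⟨y', hy', hjy'⟩ := h
            refine Or.inr fun z hz => ?_
            by_contra hzj
            push_neg at hzj
            have hjC : j ∈ cls π i' :=
              env_interval π _ ⟨i', rfl⟩ z (hAC hz) y' (hAC hy') j hzj hjy'.le
            have hjB : j ∈ cls π i :=
              env_interval π _ ⟨i, rfl⟩ x hxB y hyB j hxj hjy.le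
            exact hCB (cls_eq ((hjC : Rel π i' j).trans (hjB : Rel π i j).symm))
      have := ((hxB : Rel π i x).symm.trans (hyB : Rel π i y)) j hcut
      exact absurd (this.mp hxj) (not_le.mpr hjy)
    · exact hgt x hx
  · push_neg at hy
    exact Or.inl fun A hA x hx => hy x (hA.2 hx)

lemma part2 {π : Set (Set (Fin k))} (hπ : Setoid.IsPartition π) {σ : Set (Set (Fin k))}
    (hσ : IsIntervalEnv π σ) :
    ∃ f : Set (Fin k) → Set (Set (Fin k)),
      (∀ B ∈ σ, f B = {A | A ∈ π ∧ A ⊆ B}) ∧ (∀ B ∉ σ, f B = ∅) ∧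
      (∀ B ∈ σ, PartOn B (f B) ∧ IrreducibleOn (f B)) ∧
      (⋃ B ∈ σ, f B) = π := by
  refine ⟨fun B => {A | A ∈ π ∧ A ⊆ B ∧ B ∈ σ}, ?_, ?_, ?_, ?_⟩
  · intro B hB
    ext A; simp only [Set.mem_setOf_eq]
    exact ⟨fun h => ⟨h.1, h.2.1⟩, fun h => ⟨h.1, h.2, hB⟩⟩
  · intro B hB
    ext A; simp only [Set.mem_setOf_eq, Set.mem_empty_iff_false, iff_false]
    exact fun h => hB h.2.2
  · intro B hB
    have he : {A | A ∈ π ∧ A ⊆ B ∧ B ∈ σ} = {A | A ∈ π ∧ A ⊆ B} := by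
      ext A; simp only [Set.mem_setOf_eq]
      exact ⟨fun h => ⟨h.1, h.2.1⟩, fun h => ⟨h.1, h.2, hB⟩⟩
    show PartOn B {A | A ∈ π ∧ A ⊆ B ∧ B ∈ σ} ∧ IrreducibleOn {A | A ∈ π ∧ A ⊆ B ∧ B ∈ σ}
    rw [he]
    exact ⟨restrict_partOn hπ hσ hB, restrict_irred hπ hσ hB⟩
  · ext A
    simp only [Set.mem_iUnion, Set.mem_setOf_eq]
    constructor
    · rintro ⟨B, hB, hA, -⟩
      exact hA
    · intro hA
      obtain ⟨B, hB, hAB⟩ := hσ.2.2.1 A hA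
      exact ⟨B, hB, hA, hAB, hB⟩

lemma union_partition {σ : Set (Set (Fin k))} {f : Set (Fin k) → Set (Set (Fin k))}
    (hσ : Setoid.IsPartition σ) (hf : ∀ B ∈ σ, PartOn B (f B)) :
    Setoid.IsPartition (⋃ B ∈ σ, f B) := by
  constructor
  · intro h
    obtain ⟨B, hB, h⟩ := Set.mem_iUnion₂.mp h
    exact (hf B hB).1 h
  · intro a
    obtain ⟨B, ⟨hB, haB⟩, -⟩ := hσ.2 a
    obtain ⟨A, ⟨hA, haA⟩, huniq⟩ := (hf B hB).2.2 a haB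
    refine ⟨A, ⟨Set.mem_iUnion₂.mpr ⟨B, hB, hA⟩, haA⟩, ?_⟩
    rintro A' ⟨hA', haA'⟩
    obtain ⟨B', hB', hA'B'⟩ := Set.mem_iUnion₂.mp hA'
    have haB' : a ∈ B' := (hf B' hB').2.1 A' hA'B' haA'
    have hBe : B' = B := blocks_eq hσ hB' hB haB' haB
    exact huniq A' ⟨hBe ▸ hA'B', haA'⟩

lemma domain_env {σ : Set (Set (Fin k))} {f : Set (Fin k) → Set (Set (Fin k))}
    (hσ : Setoid.IsPartition σ) (hint : ∀ A ∈ σ, IsInterval A)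
    (hf : ∀ B ∈ σ, PartOn B (f B) ∧ IrreducibleOn (f B)) :
    IsIntervalEnv (⋃ B ∈ σ, f B) σ := by
  refine ⟨hσ, hint, ?_, ?_⟩
  · intro A hA
    obtain ⟨B, hB, hAB⟩ := Set.mem_iUnion₂.mp hA
    exact ⟨B, hB, (hf B hB).1.2.1 A hAB⟩
  · intro σ' hp' hint' hc' B hB
    obtain ⟨a, ha⟩ := block_nonempty hσ hB
    obtain ⟨B', ⟨hB', haB'⟩, -⟩ := hp'.2 a
    refine ⟨B', hB', fun b hb => ?_⟩
    by_contra hbB'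
    obtain ⟨j, hj, hcase⟩ := sep hp' hint' hc' hB' haB' hbB'
    have hside : ∀ A ∈ f B, (∀ x ∈ A, x ≤ j) ∨ (∀ x ∈ A, j < x) := fun A hA =>
      hj A (Set.mem_iUnion₂.mpr ⟨B, hB, hA⟩)
    obtain ⟨Aa, ⟨hAa, haAa⟩, -⟩ := (hf B hB).1.2.2 a ha
    obtain ⟨Ab, ⟨hAb, hbAb⟩, -⟩ := (hf B hB).1.2.2 b hb
    rcases (hf B hB).2 j hside with h | h
    · rcases hcase with ⟨h1, h2⟩ | ⟨h1, h2⟩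
      · exact absurd (h Ab hAb b hbAb) (not_le.mpr h2)
      · exact absurd (h Aa hAa a haAa) (not_le.mpr h2)
    · rcases hcase with ⟨h1, h2⟩ | ⟨h1, h2⟩
      · exact absurd h1 (not_le.mpr (h Aa hAa a haAa))
      · exact absurd h1 (not_le.mpr (h Ab hAb b hbAb))

lemma f_eq {σ : Set (Set (Fin k))} {f : Set (Fin k) → Set (Set (Fin k))}
    (hσ : Setoid.IsPartition σ) (hf : ∀ B ∈ σ, PartOn B (f B))
    (hf0 : ∀ B ∉ σ, f B = ∅) (B : Set (Fin k)) :
    f B = {A | A ∈ (⋃ C ∈ σ, f C) ∧ A ⊆ B ∧ B ∈ σ} := by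
  by_cases hB : B ∈ σ
  · ext A
    simp only [Set.mem_setOf_eq]
    constructor
    · intro hA
      exact ⟨Set.mem_iUnion₂.mpr ⟨B, hB, hA⟩, (hf B hB).2.1 A hA, hB⟩
    · rintro ⟨hA, hAB, -⟩
      obtain ⟨B', hB', hAB'⟩ := Set.mem_iUnion₂.mp hA
      have hAne : A ≠ ∅ := fun h => (hf B' hB').1 (h ▸ hAB')
      obtain ⟨a, ha⟩ := Set.nonempty_iff_ne_empty.mpr hAne
      have hBe : B' = B := blocks_eq hσ hB' hB ((hf B' hB').2.1 A hAB' ha) (hAB ha)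
      exact hBe ▸ hAB'
  · rw [hf0 B hB]
    ext A
    simp only [Set.mem_setOf_eq, Set.mem_empty_iff_false, false_iff]
    rintro ⟨-, -, h⟩
    exact hB h

end IID

/-- The map `(σ, (π_B)_{B∈σ}) ↦ ⋃_{B∈σ} π_B`, where `σ` is an interval partition of `[k]`
and each `π_B` is an irreducible partition of the block `B`, is a bijection onto the set
of all partitions of `[k]`; the inverse sends `π` to its interval envelope together with
its restrictions to the envelope's blocks. -/
theorem interval_irreducible_decomposition {k : ℕ} :
    Set.BijOn
      (fun p : Set (Set (Fin k)) × (Set (Fin k) → Set (Set (Fin k))) => ⋃ B ∈ p.1, p.2 B)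
      {p | Setoid.IsPartition p.1 ∧ (∀ A ∈ p.1, IsInterval A) ∧
            (∀ B ∈ p.1, PartOn B (p.2 B) ∧ IrreducibleOn (p.2 B)) ∧ (∀ B ∉ p.1, p.2 B = ∅)}
      {π | Setoid.IsPartition π} ∧
    ∀ π : Set (Set (Fin k)), Setoid.IsPartition π → ∀ σ : Set (Set (Fin k)),
      IsIntervalEnv π σ →
      ∃ f : Set (Fin k) → Set (Set (Fin k)),
        (∀ B ∈ σ, f B = {A | A ∈ π ∧ A ⊆ B}) ∧ (∀ B ∉ σ, f B = ∅) ∧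
        (∀ B ∈ σ, PartOn B (f B) ∧ IrreducibleOn (f B)) ∧
        (⋃ B ∈ σ, f B) = π := by
  constructor
  · refine ⟨?_, ?_, ?_⟩
    · rintro ⟨σ, f⟩ ⟨hσ, hint, hf, hf0⟩
      exact IID.union_partition hσ (fun B hB => (hf B hB).1)
    · rintro ⟨σ₁, f₁⟩ ⟨hσ₁, hint₁, hf₁, h01⟩ ⟨σ₂, f₂⟩ ⟨hσ₂, hint₂, hf₂, h02⟩ heq
      have heq' : (⋃ B ∈ σ₁, f₁ B) = ⋃ B ∈ σ₂, f₂ B := heq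
      have hσ₁ : Setoid.IsPartition σ₁ := hσ₁
      have hint₁ : ∀ A ∈ σ₁, IsInterval A := hint₁
      have hf₁ : ∀ B ∈ σ₁, PartOn B (f₁ B) ∧ IrreducibleOn (f₁ B) := hf₁
      have h01 : ∀ B ∉ σ₁, f₁ B = ∅ := h01
      have hσ₂ : Setoid.IsPartition σ₂ := hσ₂
      have hint₂ : ∀ A ∈ σ₂, IsInterval A := hint₂
      have hf₂ : ∀ B ∈ σ₂, PartOn B (f₂ B) ∧ IrreducibleOn (f₂ B) := hf₂
      have h02 : ∀ B ∉ σ₂, f₂ B = ∅ := h02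
      have e1 := IID.domain_env hσ₁ hint₁ hf₁
      have e2 := IID.domain_env hσ₂ hint₂ hf₂
      rw [heq'] at e1
      have hσe : σ₁ = σ₂ := IID.env_unique e1 e2
      have hfe : f₁ = f₂ := by
        funext B
        rw [IID.f_eq hσ₁ (fun B hB => (hf₁ B hB).1) h01 B,
            IID.f_eq hσ₂ (fun B hB => (hf₂ B hB).1) h02 B, heq', hσe]
      rw [Prod.mk.injEq]
      exact ⟨hσe, hfe⟩
    · intro π hπ
      obtain ⟨f, hf1, hf2, hf3, hf4⟩ := IID.part2 hπ (IID.env_isEnv hπ)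
      exact ⟨⟨IID.env π, f⟩, ⟨IID.env_partition π, IID.env_interval π, hf3, hf2⟩, hf4⟩
  · intro π hπ σ hσ
    exact IID.part2 hπ hσ
end

section
/- Fix a bigraph G. If two words w, w' over the alphabet V are equivalent (i.e., related by a sequence of swaps of adjacent letters whose pair lies in E₂ ∩ E₁ ∩ E₁ᵀ), then w is permissible if and only if w' is permissible. -/
/-- `a` and `b` are in tensor relation: `(a,b) ∈ E₂ ∩ E₁ ∩ E₁ᵀ`. -/
def Tensor {V : Type} (G : Bigraph V) (a b : V) : Prop :=
  (a, b) ∈ G.E2 ∧ (a, b) ∈ G.E1 ∧ (b, a) ∈ G.E1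

/-- Elementary swap of two consecutive letters in tensor relation. -/
def Swap {V : Type} (G : Bigraph V) (w w' : List V) : Prop :=
  ∃ (l1 l2 : List V) (a b : V), Tensor G a b ∧
    w = l1 ++ a :: b :: l2 ∧ w' = l1 ++ b :: a :: l2

/-- Equivalence of words: the reflexive-transitive closure of elementary swaps. -/
def WordEquiv {V : Type} (G : Bigraph V) : List V → List V → Prop :=
  Relation.ReflTransGen (Swap G)

/-- A word `v₁ ⋯ v_k` is permissible if `(v_{i₂}, v_{i₁}) ∈ E₁` whenever `i₁ < i₂`. -/
def Permissible {V : Type} (G : Bigraph V) (w : List V) : Prop :=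
  ∀ i j : Fin w.length, (i : ℕ) < (j : ℕ) → (w.get j, w.get i) ∈ G.E1

/-- A word is reduced if any two equal letters are separated by a letter different from
them and not in tensor relation with them. -/
def Reduced {V : Type} (G : Bigraph V) (w : List V) : Prop :=
  ∀ i j : Fin w.length, (i : ℕ) < (j : ℕ) → w.get i = w.get j →
    ∃ l : Fin w.length, (i : ℕ) < (l : ℕ) ∧ (l : ℕ) < (j : ℕ) ∧
      w.get l ≠ w.get i ∧ ¬ Tensor G (w.get i) (w.get l)


theorem permissible_iff_pairwise {V : Type} (G : Bigraph V) (w : List V) :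
    Permissible G w ↔ List.Pairwise (fun a b => (b, a) ∈ G.E1) w := by
  rw [List.pairwise_iff_get]
  rfl

theorem pairwise_swap {V : Type} (R : V → V → Prop) (l1 l2 : List V) (a b : V)
    (hab : R a b) (hba : R b a) :
    List.Pairwise R (l1 ++ a :: b :: l2) ↔ List.Pairwise R (l1 ++ b :: a :: l2) := by
  simp only [List.pairwise_append, List.pairwise_cons, List.mem_cons]
  constructor <;> intro h <;>
    exact ⟨h.1, ⟨fun x hx => hx.elim (fun e => e ▸ (by assumption))
        (fun hm => h.2.1.2.1 x hm),
        fun x hx => h.2.1.1 x (Or.inr hx), h.2.1.2.2⟩,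
      fun x hx y hy => by
        rcases hy with rfl | rfl | hm
        · exact h.2.2 x hx y (Or.inr (Or.inl rfl))
        · exact h.2.2 x hx y (Or.inl rfl)
        · exact h.2.2 x hx y (Or.inr (Or.inr hm))⟩

/-- Lemma 3.2(2): equivalent words are simultaneously permissible. -/
theorem permissible_iff_of_wordEquiv {V : Type} (G : Bigraph V) (w w' : List V)
    (h : WordEquiv G w w') : Permissible G w ↔ Permissible G w' := by
  induction h with
  | refl => rfl
  | tail _ hs ih =>
    rename_i w1 w2 _
    obtain ⟨l1, l2, a, b, ⟨_, hab, hba⟩, rfl, rfl⟩ := hs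
    rw [ih, permissible_iff_pairwise, permissible_iff_pairwise,
      pairwise_swap _ _ _ _ _ hba hab]
end

section
/- Fix a bigraph G and a letter v ∈ V. For words w, w' over the alphabet V, the words vw and vw' are equivalent if and only if w and w' are equivalent. -/
lemma Tensor.symm' {V : Type} {G : Bigraph V} {a b : V} (h : Tensor G a b) :
    Tensor G b a := ⟨G.symm2 _ _ h.1, h.2.2, h.2.1⟩

lemma swap_step {V : Type} {G : Bigraph V} {v : V} {u u' l r : List V}
    (hs : Swap G u u') (hu : u = l ++ v :: r) (hl : ∀ a ∈ l, Tensor G a v) :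
    ∃ l' r', u' = l' ++ v :: r' ∧ (∀ a ∈ l', Tensor G a v) ∧
      WordEquiv G (l ++ r) (l' ++ r') := by
  obtain ⟨l1, l2, a, b, hab, h1, h2⟩ := hs
  rw [hu] at h1
  rcases List.append_eq_append_iff.1 h1 with ⟨t, ht1, ht2⟩ | ⟨t, ht1, ht2⟩
  · -- l1 = l ++ t, v :: r = t ++ a :: b :: l2
    cases t with
    | nil =>
      simp only [List.nil_append, List.cons.injEq] at ht2
      obtain ⟨rfl, rfl⟩ := ht2
      refine ⟨l ++ [b], l2, ?_, ?_, ?_⟩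
      · simp [h2, ht1]
      · intro x hx
        rcases List.mem_append.1 hx with h | h
        · exact hl x h
        · simp only [List.mem_singleton] at h; subst h; exact hab.symm'
      · have : (l ++ [b]) ++ l2 = l ++ b :: l2 := by simp
        rw [this]
        exact Relation.ReflTransGen.refl
    | cons x t' =>
      simp only [List.cons_append, List.cons.injEq] at ht2
      obtain ⟨rfl, rfl⟩ := ht2
      refine ⟨l, t' ++ b :: a :: l2, ?_, hl, ?_⟩
      · simp [h2, ht1]
      · exact Relation.ReflTransGen.single
          ⟨l ++ t', l2, a, b, hab, by simp, by simp⟩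
  · -- l = l1 ++ t, a :: b :: l2 = t ++ v :: r
    cases t with
    | nil =>
      simp only [List.nil_append, List.cons.injEq] at ht2
      obtain ⟨rfl, rfl⟩ := ht2
      simp only [List.append_nil] at ht1
      subst ht1
      refine ⟨l ++ [b], l2, ?_, ?_, ?_⟩
      · simp [h2]
      · intro x hx
        rcases List.mem_append.1 hx with h | h
        · exact hl x h
        · simp only [List.mem_singleton] at h; subst h; exact hab.symm'
      · have : (l ++ [b]) ++ l2 = l ++ b :: l2 := by simp
        rw [this]
        exact Relation.ReflTransGen.refl
    | cons y t2 =>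
      cases t2 with
      | nil =>
        simp only [List.cons_append, List.nil_append, List.cons.injEq] at ht2
        obtain ⟨rfl, rfl, rfl⟩ := ht2
        refine ⟨l1, a :: l2, by simp [h2], fun x hx => hl x (by simp [ht1, hx]), ?_⟩
        have : l ++ l2 = l1 ++ a :: l2 := by simp [ht1]
        rw [this]
        exact Relation.ReflTransGen.refl
      | cons z t3 =>
        simp only [List.cons_append, List.cons.injEq] at ht2
        obtain ⟨rfl, rfl, rfl⟩ := ht2
        refine ⟨l1 ++ b :: a :: t3, r, ?_, ?_, ?_⟩
        · simp [h2]
        · intro x hx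
          have : x ∈ l := by
            rw [ht1]; simp only [List.mem_append, List.mem_cons] at hx ⊢; tauto
          exact hl x this
        · refine Relation.ReflTransGen.single
            ⟨l1, t3 ++ r, a, b, hab, ?_, by simp⟩
          simp [ht1]

lemma equiv_decomp {V : Type} {G : Bigraph V} {v : V} {u u' : List V}
    (h : WordEquiv G u u') : ∀ l r : List V, u = l ++ v :: r →
    (∀ a ∈ l, Tensor G a v) →
    ∃ l' r', u' = l' ++ v :: r' ∧ (∀ a ∈ l', Tensor G a v) ∧
      WordEquiv G (l ++ r) (l' ++ r') := by
  induction h with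
  | refl => exact fun l r hu hl => ⟨l, r, hu, hl, Relation.ReflTransGen.refl⟩
  | tail _ hs ih =>
    intro l r hu hl
    obtain ⟨l', r', hu', hl', he⟩ := ih l r hu hl
    obtain ⟨l'', r'', hu'', hl'', he'⟩ := swap_step hs hu' hl'
    exact ⟨l'', r'', hu'', hl'', he.trans he'⟩

/-- Lemma 3.2(3): `vw ∼ vw'` if and only if `w ∼ w'`. -/
theorem cons_wordEquiv_iff {V : Type} (G : Bigraph V) (v : V) (w w' : List V) :
    WordEquiv G (v :: w) (v :: w') ↔ WordEquiv G w w' := by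
  constructor
  · intro h
    obtain ⟨l', r', hu', hl', he⟩ :=
      equiv_decomp h [] w rfl (by simp)
    cases l' with
    | nil =>
      obtain rfl : w' = r' := by simpa using hu'
      simpa using he
    | cons x t =>
      exfalso
      have hx : v = x := by simpa using congrArg List.head? hu'
      have hT := hl' x (by simp)
      rw [← hx] at hT
      exact G.irrefl2 v hT.1
  · intro h
    refine Relation.ReflTransGen.lift (v :: ·) ?_ w w' h
    rintro a b ⟨l1, l2, x, y, hxy, rfl, rfl⟩
    exact ⟨v :: l1, l2, x, y, hxy, rfl, rfl⟩
end

section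
/- Let G be a bigraph with E₂ = (E₁ ∩ E₁ᵀ) \ Δ. Then in every permissible reduced word over V, each letter appears at most once. -/
/-- If `E₂ = (E₁ ∩ E₁ᵀ) \ Δ`, every permissible reduced word has no repeated letters. -/
theorem permissible_reduced_nodup {V : Type} (G : Bigraph V)
    (hE2 : G.E2 = {p : V × V | p ∈ G.E1 ∧ (p.2, p.1) ∈ G.E1 ∧ p.1 ≠ p.2})
    (w : List V) (hperm : Permissible G w) (hred : Reduced G w) :
    w.Nodup := by
  rw [List.nodup_iff_injective_get]
  intro i j hij
  by_contra hne
  rcases lt_or_gt_of_ne (fun h => hne (Fin.ext h)) with h | h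
  · obtain ⟨l, hil, hlj, hne', hnt⟩ := hred i j h hij
    exact hnt ⟨hE2 ▸ ⟨(hij ▸ hperm l j hlj : _), hperm i l hil, fun e => hne' e.symm⟩,
      hij ▸ hperm l j hlj, hperm i l hil⟩
  · obtain ⟨l, hil, hlj, hne', hnt⟩ := hred j i h hij.symm
    exact hnt ⟨hE2 ▸ ⟨(hij ▸ hperm l i hlj : _), hperm j l hil, fun e => hne' e.symm⟩,
      hij ▸ hperm l i hlj, hperm j l hil⟩
end

section
/- Every bigraph G = (V, E₁, E₂) can be realized by a family of set partitions: setting S = V × V, S_v^{(1)} = {(v,w), (w,v) : (v,w) ∉ E₂}, S_v^{(2)} = {(w,w) : (w,v) ∉ E₁}, and S_v^{(3)} = S \ (S_v^{(1)} ∪ S_v^{(2)}), each S_v^{(1)} is nonempty, S_v^{(1)}, S_v^{(2)}, S_v^{(3)} partition S, and one recovers E₁ = {(v,w) : S_v^{(1)} ∩ S_w^{(2)} = ∅} and E₂ = {(v,w) : S_v^{(1)} ∩ S_w^{(1)} = ∅}. -/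
/-- `S_v^{(1)} = {(v,w), (w,v) : (v,w) ∉ E₂}`. -/
def siteOne {V : Type} (G : Bigraph V) (v : V) : Set (V × V) :=
  {p | (p.1 = v ∧ (v, p.2) ∉ G.E2) ∨ (p.2 = v ∧ (v, p.1) ∉ G.E2)}

/-- `S_v^{(2)} = {(w,w) : (w,v) ∉ E₁}`. -/
def siteTwo {V : Type} (G : Bigraph V) (v : V) : Set (V × V) :=
  {p | p.1 = p.2 ∧ (p.1, v) ∉ G.E1}

/-- `S_v^{(3)} = (V × V) \ (S_v^{(1)} ∪ S_v^{(2)})`. -/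
def siteThree {V : Type} (G : Bigraph V) (v : V) : Set (V × V) :=
  Set.univ \ (siteOne G v ∪ siteTwo G v)

/-- Every bigraph is realized by the family of set partitions of `S = V × V` given by
`siteOne`, `siteTwo`, `siteThree`: each `S_v^{(1)}` is nonempty, the three sets
partition `S`, and the edge sets are recovered as
`E₁ = {(v,w) : S_v^{(1)} ∩ S_w^{(2)} = ∅}` and `E₂ = {(v,w) : S_v^{(1)} ∩ S_w^{(1)} = ∅}`. -/
theorem bigraph_realized_by_sites {V : Type} (G : Bigraph V) :
    (∀ v : V, (siteOne G v).Nonempty) ∧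
    (∀ v : V, Disjoint (siteOne G v) (siteTwo G v)) ∧
    (∀ v : V, Disjoint (siteOne G v) (siteThree G v)) ∧
    (∀ v : V, Disjoint (siteTwo G v) (siteThree G v)) ∧
    (∀ v : V, siteOne G v ∪ siteTwo G v ∪ siteThree G v = Set.univ) ∧
    G.E1 = {q : V × V | siteOne G q.1 ∩ siteTwo G q.2 = ∅} ∧
    G.E2 = {q : V × V | siteOne G q.1 ∩ siteOne G q.2 = ∅} := by
  refine ⟨?_, ?_, ?_, ?_, ?_, ?_, ?_⟩
  · intro v
    exact ⟨(v, v), Or.inl ⟨rfl, G.irrefl2 v⟩⟩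
  · intro v
    rw [Set.disjoint_left]
    rintro ⟨a, b⟩ h1 h2
    simp only [siteOne, siteTwo, Set.mem_setOf_eq] at h1 h2
    obtain ⟨hab, hE⟩ := h2
    rcases h1 with ⟨rfl, -⟩ | ⟨rfl, -⟩
    · exact hE (G.refl1 _)
    · cases hab; exact hE (G.refl1 _)
  · intro v
    rw [Set.disjoint_left]
    intro p h1 h3
    exact h3.2 (Or.inl h1)
  · intro v
    rw [Set.disjoint_left]
    intro p h2 h3
    exact h3.2 (Or.inr h2)
  · intro v
    ext p
    simp [siteThree]
  · ext ⟨v, w⟩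
    simp only [Set.mem_setOf_eq, Set.eq_empty_iff_forall_notMem]
    constructor
    · intro hvw ⟨a, b⟩ hm
      simp only [siteOne, siteTwo, Set.mem_inter_iff, Set.mem_setOf_eq] at hm
      obtain ⟨h1, hab, hE⟩ := hm
      rcases h1 with ⟨rfl, -⟩ | ⟨rfl, -⟩
      · exact hE hvw
      · cases hab; exact hE hvw
    · intro h
      by_contra hvw
      exact h ⟨v, v⟩ ⟨Or.inl ⟨rfl, G.irrefl2 v⟩, rfl, hvw⟩
  · ext ⟨v, w⟩
    simp only [Set.mem_setOf_eq, Set.eq_empty_iff_forall_notMem]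
    constructor
    · intro hvw ⟨a, b⟩ hm
      simp only [siteOne, Set.mem_inter_iff, Set.mem_setOf_eq] at hm
      obtain ⟨h1, h2⟩ := hm
      rcases h1 with ⟨rfl, hE⟩ | ⟨rfl, hE⟩ <;> rcases h2 with ⟨h', hE'⟩ | ⟨h', hE'⟩
      · cases h'; exact G.irrefl2 _ hvw
      · cases h'; exact hE' (G.symm2 _ _ hvw)
      · cases h'; exact hE hvw
      · cases h'; exact G.irrefl2 _ hvw
    · intro h
      by_contra hvw
      exact h ⟨v, w⟩ ⟨Or.inl ⟨rfl, hvw⟩, Or.inr ⟨rfl, fun hc => hvw (G.symm2 _ _ hc)⟩⟩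
end
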